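/- arXiv:1611.02880 — 7 statements merged into one kernel-verified Lean document; each statement's English description precedes it below -/
import Mathlib

section
/- Let M, k, α be integers with 1 ≤ k ≤ M and α ≥ k. Then the sum Σ_{h=k}^{α} (-1)^{h-k} · C(h-1, k-1) · C(M, h) is ≥ 1 if α - k is even, and ≤ 1 if α - k is odd (here C(a,b) denotes the binomial coefficient). -/
/-!
Write `M = N + k` and `α = k + β`. The partial sum equals `1 + (-1) ^ β * R`, where
`R = ∑ j < k, C(β + j, j) * C(N + j, β + j + 1)` (`chooseRemainder N k β`) is a natural number,
so the partial sum lies on the side of `1` given by the sign of `(-1) ^ β`. The identity follows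
by induction on `β`: for `β = 0` it is the hockey stick identity `R + 1 = C(N + k, k)`, and two
consecutive remainders add up to `C(β + k, k - 1) * C(N + k, β + k + 1)`, the absolute value of
the next summand, by Pascal's rule and induction on `k`.
-/

open Finset

def chooseRemainder (N k β : ℕ) : ℕ :=
  ∑ j ∈ range k, (β + j).choose j * (N + j).choose (β + j + 1)

lemma chooseRemainder_succ (N k β : ℕ) : chooseRemainder N (k + 1) β =
    chooseRemainder N k β + (β + k).choose k * (N + k).choose (β + k + 1) :=
  sum_range_succ _ _

lemma chooseRemainder_zero_add_one (N k : ℕ) : chooseRemainder N k 0 + 1 = (N + k).choose k := by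
  induction k with
  | zero => simp [chooseRemainder]
  | succ k ih =>
    rw [chooseRemainder_succ, add_right_comm, ih, ← add_assoc, Nat.choose_succ_succ']
    simp [add_comm]

lemma chooseRemainder_add_chooseRemainder_succ (N m β : ℕ) :
    chooseRemainder N (m + 1) β + chooseRemainder N (m + 1) (β + 1) =
      (β + m + 1).choose m * (N + m + 1).choose (β + m + 2) := by
  induction m with
  | zero => simp [chooseRemainder, Nat.choose_succ_succ' N (β + 1)]
  | succ m ih =>
    rw [chooseRemainder_succ, chooseRemainder_succ N (m + 1), add_add_add_comm, ih]
    linear_combination (norm := ring_nf)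
      (N + m + 1).choose (β + m + 2) * (Nat.choose_succ_succ' (β + m + 1) m).symm +
        (β + m + 2).choose (m + 1) * (Nat.choose_succ_succ' (N + m + 1) (β + m + 2)).symm

theorem sum_range_neg_one_pow_mul_choose_mul_choose {R : Type*} [CommRing R] (N m β : ℕ) :
    ∑ i ∈ range (β + 1),
        (-1 : R) ^ i * ((m + i).choose m : R) * ((N + m + 1).choose (m + 1 + i) : R) =
      1 + (-1) ^ β * (chooseRemainder N (m + 1) β : R) := by
  induction β with
  | zero =>
    have hockey_stick := chooseRemainder_zero_add_one N (m + 1)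
    rw [← add_assoc] at hockey_stick
    simp [← hockey_stick, add_comm]
  | succ β ih =>
    have step : (chooseRemainder N (m + 1) β : R) + chooseRemainder N (m + 1) (β + 1) =
        (m + (β + 1)).choose m * (N + m + 1).choose (m + 1 + (β + 1)) := by
      rw [← Nat.cast_add, chooseRemainder_add_chooseRemainder_succ]
      push_cast
      ring_nf
    rw [sum_range_succ, ih]
    linear_combination (-1 : R) ^ β * step

theorem binomial_alternating_sum_one (M k α : ℕ) (hk : 1 ≤ k) (hkM : k ≤ M) (hkα : k ≤ α) :
    (Even (α - k) →
      1 ≤ ∑ h ∈ Finset.Icc k α,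
        (-1 : ℝ) ^ (h - k) * ((h - 1).choose (k - 1)) * (M.choose h)) ∧
    (Odd (α - k) →
      ∑ h ∈ Finset.Icc k α,
        (-1 : ℝ) ^ (h - k) * ((h - 1).choose (k - 1)) * (M.choose h) ≤ 1) := by
  obtain ⟨m, rfl⟩ : ∃ m, k = m + 1 := ⟨k - 1, by omega⟩
  obtain ⟨N, rfl⟩ : ∃ N, M = N + m + 1 := ⟨M - (m + 1), by omega⟩
  obtain ⟨β, rfl⟩ : ∃ β, α = m + 1 + β := ⟨α - (m + 1), by omega⟩
  have partial_sum : ∑ h ∈ Icc (m + 1) (m + 1 + β),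
      (-1 : ℝ) ^ (h - (m + 1)) * ((h - 1).choose (m + 1 - 1)) * ((N + m + 1).choose h) =
        1 + (-1) ^ β * (chooseRemainder N (m + 1) β : ℝ) := by
    rw [← Ico_add_one_right_eq_Icc, sum_Ico_eq_sum_range,
      ← sum_range_neg_one_pow_mul_choose_mul_choose,
      show m + 1 + β + 1 - (m + 1) = β + 1 by omega]
    refine sum_congr rfl fun i _ => ?_
    rw [Nat.add_sub_cancel_left, add_right_comm m 1 i, Nat.add_sub_cancel, Nat.add_sub_cancel]
  have remainder_nonneg : (0 : ℝ) ≤ chooseRemainder N (m + 1) β := Nat.cast_nonneg _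
  rw [Nat.add_sub_cancel_left, partial_sum]
  exact ⟨fun hβ => by rw [hβ.neg_one_pow]; linarith,
    fun hβ => by rw [hβ.neg_one_pow]; linarith⟩
end

section
/- Let k, M, α be integers with 1 ≤ k ≤ M, α ≥ k, and α - k odd. Let σ_{k-1}, σ_k, ..., σ_α be real numbers in [0,1] satisfying σ_{k+2t-1} ≥ σ_{k+2t} and σ_{k+2t} ≤ σ_{k+2t+1} for all integers t ≥ 0 (whenever the indices involved lie in {k-1, ..., α}). Then Σ_{h=k}^{α} (-1)^{h-k} · C(h-1, k-1) · C(M, h) · σ_h ≤ σ_{k-1}. -/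
/-!
Write `a h = C(h-1, k-1) C(M, h)` and `M = k + n`. The weights `w 0 = 1` and
`w (p+1) = ∑_{m<n} C(k+m, k-1) C(m, p)` are nonnegative and satisfy `w i + w (i+1) = a (k+i)`
(hockey stick). Abel summation in pairs of consecutive terms then bounds the alternating sum by
`w 0 σ_{k-1} - w (α-k+1) σ_α ≤ σ_{k-1}`: the pair starting at `k+2t` changes the bound by
`w (2t) (σ_{k+2t} - σ_{k+2t-1}) + w (2t+1) (σ_{k+2t} - σ_{k+2t+1}) ≤ 0`.
-/

open Finset

theorem alternating_sum_le_of_zigzag (w s : ℕ → ℝ) (n : ℕ) (hw : ∀ i < 2 * n, 0 ≤ w i)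
    (hdown : ∀ t < n, s (2 * t + 1) ≤ s (2 * t))
    (hup : ∀ t < n, s (2 * t + 1) ≤ s (2 * t + 2)) :
    ∑ i ∈ range (2 * n), (-1 : ℝ) ^ i * (w i + w (i + 1)) * s (i + 1) ≤
      w 0 * s 0 - w (2 * n) * s (2 * n) := by
  induction n with
  | zero => simp
  | succ n ih =>
    have ih := ih (fun i hi => hw i (by omega)) (fun t ht => hdown t (by omega))
      (fun t ht => hup t (by omega))
    have hpair : w (2 * n) * (s (2 * n + 1) - s (2 * n)) +
        w (2 * n + 1) * (s (2 * n + 1) - s (2 * n + 2)) ≤ 0 := by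
      have := mul_nonpos_of_nonneg_of_nonpos (hw (2 * n) (by omega))
        (sub_nonpos.2 (hdown n (by omega)))
      have := mul_nonpos_of_nonneg_of_nonpos (hw (2 * n + 1) (by omega))
        (sub_nonpos.2 (hup n (by omega)))
      linarith
    rw [show 2 * (n + 1) = 2 * n + 1 + 1 by ring, sum_range_succ, sum_range_succ,
      pow_succ, pow_mul]
    norm_num
    linarith

theorem Nat.choose_add_sum_range_choose (a b n : ℕ) :
    a.choose (b + 1) + ∑ m ∈ range n, (a + m).choose b = (a + n).choose (b + 1) := by
  induction n with
  | zero => simp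
  | succ n ih =>
    rw [sum_range_succ, ← add_assoc, ih, ← add_assoc, Nat.choose_succ_succ', add_comm]

/-- `tailWeight (k-1) (M-k) i` equals the alternating tail
`∑_{h ≥ k+i} (-1)^(h-k-i) C(h-1, k-1) C(M, h)`; this closed form makes it visibly
nonnegative. -/
def tailWeight (j n : ℕ) : ℕ → ℕ
  | 0 => 1
  | p + 1 => ∑ m ∈ range n, (j + 1 + m).choose j * m.choose p

theorem tailWeight_add_tailWeight_succ (j n i : ℕ) :
    tailWeight j n i + tailWeight j n (i + 1) =
      (j + i).choose j * (j + 1 + n).choose (j + 1 + i) := by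
  cases i with
  | zero =>
    simpa [tailWeight] using Nat.choose_add_sum_range_choose (j + 1) j n
  | succ p =>
    have hmul : ∀ m, (j + 1 + m).choose j * (m + 1).choose (p + 1) =
        (j + 1 + m).choose (j + 1 + p) * (j + (p + 1)).choose j := by
      intro m
      rw [show j + (p + 1) = j + 1 + p by ring, Nat.choose_mul (by omega),
        show j + 1 + m - j = m + 1 by omega, show j + 1 + p - j = p + 1 by omega]
    have hzero : (j + 1).choose (j + 1 + p + 1) = 0 := Nat.choose_eq_zero_of_lt (by omega)
    simp only [tailWeight, ← sum_add_distrib, ← mul_add, ← Nat.choose_succ_succ', hmul,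
      ← sum_mul]
    rw [← add_assoc (j + 1) p 1, ← Nat.choose_add_sum_range_choose, hzero, zero_add, mul_comm]

theorem schmidt_sieve_upper_general (k M α : ℕ) (σ : ℕ → ℝ)
    (hk : 1 ≤ k) (hkM : k ≤ M) (hodd : Odd (α - k))
    (hrange : ∀ h, k - 1 ≤ h → h ≤ α → σ h ∈ Set.Icc (0 : ℝ) 1)
    (hdown : ∀ t : ℕ, k + 2 * t ≤ α → σ (k + 2 * t) ≤ σ (k + 2 * t - 1))
    (hup : ∀ t : ℕ, k + 2 * t + 1 ≤ α → σ (k + 2 * t) ≤ σ (k + 2 * t + 1)) :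
    ∑ h ∈ Finset.Icc k α,
      (-1 : ℝ) ^ (h - k) * ((h - 1).choose (k - 1)) * (M.choose h) * σ h ≤ σ (k - 1) := by
  obtain ⟨j, rfl⟩ : ∃ j, k = j + 1 := ⟨k - 1, by omega⟩
  obtain ⟨n, rfl⟩ := Nat.exists_eq_add_of_le hkM
  obtain ⟨u, hu⟩ := hodd
  have hα : α + 1 = j + 1 + 2 * (u + 1) := by omega
  have hzigzag := alternating_sum_le_of_zigzag (fun i => (tailWeight j n i : ℝ))
    (fun i => σ (j + i)) (u + 1) (fun _ _ => by positivity)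
    (fun t ht => by convert hdown t (by omega) using 2 <;> omega)
    (fun t ht => by convert hup t (by omega) using 2 <;> omega)
  have hσα : 0 ≤ σ (j + 2 * (u + 1)) := (hrange _ (by omega) (by omega)).1
  calc ∑ h ∈ Icc (j + 1) α, (-1 : ℝ) ^ (h - (j + 1)) * ((h - 1).choose (j + 1 - 1)) *
        ((j + 1 + n).choose h) * σ h
      = ∑ i ∈ range (2 * (u + 1)), (-1 : ℝ) ^ i *
          ((tailWeight j n i : ℝ) + tailWeight j n (i + 1)) * σ (j + (i + 1)) := by
        rw [← Ico_add_one_right_eq_Icc, hα, sum_Ico_eq_sum_range, Nat.add_sub_cancel_left]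
        refine sum_congr rfl fun i _ => ?_
        rw [← Nat.cast_add, tailWeight_add_tailWeight_succ, Nat.add_sub_cancel_left,
          Nat.add_sub_cancel, show j + 1 + i - 1 = j + i by omega]
        push_cast
        ring_nf
    _ ≤ 1 * σ j - tailWeight j n (2 * (u + 1)) * σ (j + 2 * (u + 1)) := by
        simpa [tailWeight] using hzigzag
    _ ≤ σ (j + 1 - 1) := by
        have := mul_nonneg (Nat.cast_nonneg (tailWeight j n (2 * (u + 1)))) hσα
        simp only [Nat.add_sub_cancel]
        linarith

theorem schmidt_sieve_upper (k M α : ℕ) (σ : ℕ → ℝ)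
    (hk : 1 ≤ k) (hkM : k ≤ M) (hkα : k ≤ α) (hodd : Odd (α - k))
    (hrange : ∀ h, k - 1 ≤ h → h ≤ α → σ h ∈ Set.Icc (0 : ℝ) 1)
    (hdown : ∀ t : ℕ, k + 2 * t ≤ α → σ (k + 2 * t) ≤ σ (k + 2 * t - 1))
    (hup : ∀ t : ℕ, k + 2 * t + 1 ≤ α → σ (k + 2 * t) ≤ σ (k + 2 * t + 1)) :
    ∑ h ∈ Finset.Icc k α,
      (-1 : ℝ) ^ (h - k) * ((h - 1).choose (k - 1)) * (M.choose h) * σ h ≤ σ (k - 1) :=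
  schmidt_sieve_upper_general k M α σ hk hkM hodd hrange hdown hup
end

section
/- Let P be a finite set of cardinality M ≥ 1. For each i = 1, ..., M let A_i be a collection of i-element subsets of P such that if E ∈ A_i and p ∈ E then E \ {p} ∈ A_{i-1}, and let A'_i be a collection of i-element subsets of P such that if F ∈ A_{i-1} and p ∈ P \ F then F ∪ {p} ∈ A'_i. Define σ_i and τ_i by σ_i · C(M,i) = |A_i| if i is odd and = |A'_i| if i is even, and τ_i · C(M,i) = |A_i| if i is even and = |A'_i| if i is odd. Then σ_1 ≤ σ_2 ≥ σ_3 ≤ σ_4 ≥ ... and τ_1 ≥ τ_2 ≤ τ_3 ≥ τ_4 ≤ ... (i.e., σ_{2t-1} ≤ σ_{2t} and σ_{2t} ≥ σ_{2t+1}, and τ_{2t-1} ≥ τ_{2t} and τ_{2t} ≤ τ_{2t+1}, for all t ≥ 1 with indices at most M). -/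
/-!
Write `a i = |A_i| / C(M,i)` and `a' i = |A'_i| / C(M,i)`. Double counting the pairs `F ⊂ E`
with `F ∈ A_r` and `|E| = r + 1` (the normalized matching property behind the LYM inequality)
gives the interlacing `a (r+1) ≤ a r ≤ a' (r+1)`: an `(r+1)`-set contains at most `r + 1`
members of `A_r`, exactly `r + 1` if it lies in `A_{r+1}`; a set `F ∈ A_r` lies in at most
`M - r` members of `A_{r+1}` and in all `M - r` of its one-point extensions inside `P`, which
belong to `A'_{r+1}`; and `C(M,r+1) (r+1) = C(M,r) (M-r)`. The alternating pattern of `σ` and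
`τ` follows formally from the interlacing.
-/

open Finset

lemma div_le_div_iff_of_mul_eq {K : Type*} [Field K] [LinearOrder K] [IsStrictOrderedRing K]
    {u v s w x y : K} (hu : 0 < u) (hv : 0 < v) (hw : 0 < w) (h : u * s = v * w) :
    x / u ≤ y / v ↔ x * s ≤ y * w := by
  calc x / u ≤ y / v ↔ x * v * w ≤ y * u * w := by
        rw [div_le_div_iff₀ hu hv, mul_le_mul_iff_of_pos_right hw]
    _ ↔ x * s * u ≤ y * w * u := by
        rw [show x * v * w = x * s * u by linear_combination -x * h, mul_right_comm y]
    _ ↔ x * s ≤ y * w := mul_le_mul_iff_of_pos_right hu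

namespace Finset

variable {γ : Type*} [DecidableEq γ] {P E F : Finset γ} {𝒜 ℬ 𝒞 : Finset (Finset γ)} {r : ℕ}

lemma card_le_card_filter_subset_of_erase_mem (h : ∀ p ∈ E, E.erase p ∈ ℬ) :
    #E ≤ #{F ∈ ℬ | F ⊆ E} := by
  rw [← card_image_of_injOn E.erase_injOn]
  refine card_le_card fun F hF => ?_
  obtain ⟨p, hp, rfl⟩ := mem_image.mp hF
  exact mem_filter.mpr ⟨h p hp, erase_subset p E⟩

lemma card_sdiff_le_card_filter_superset_of_insert_mem (h : ∀ p ∈ P, p ∉ F → insert p F ∈ 𝒞) :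
    #(P \ F) ≤ #{E ∈ 𝒞 | F ⊆ E} := by
  rw [← card_image_of_injOn (F.insert_inj_on.mono fun p hp => (mem_sdiff.mp hp).2)]
  refine card_le_card fun E hE => ?_
  obtain ⟨p, hp, rfl⟩ := mem_image.mp hE
  exact mem_filter.mpr ⟨h p (mem_sdiff.mp hp).1 (mem_sdiff.mp hp).2, subset_insert p F⟩

lemma card_filter_subset_le (hℬ : ∀ F ∈ ℬ, #F + 1 = #E) : #{F ∈ ℬ | F ⊆ E} ≤ #E :=
  calc #{F ∈ ℬ | F ⊆ E} ≤ #(E.image E.erase) := card_le_card fun F hF => by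
        obtain ⟨hFℬ, hFE⟩ := mem_filter.mp hF
        obtain ⟨p, hpF, rfl⟩ := exists_eq_insert_iff.mpr ⟨hFE, hℬ F hFℬ⟩
        exact mem_image.mpr ⟨p, mem_insert_self p F, erase_insert hpF⟩
    _ ≤ #E := card_image_le

lemma card_filter_superset_le (h𝒜 : ∀ E ∈ 𝒜, E ⊆ P ∧ #F + 1 = #E) :
    #{E ∈ 𝒜 | F ⊆ E} ≤ #(P \ F) :=
  calc #{E ∈ 𝒜 | F ⊆ E} ≤ #((P \ F).image (insert · F)) := card_le_card fun E hE => by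
        obtain ⟨hE𝒜, hFE⟩ := mem_filter.mp hE
        obtain ⟨hEP, hcard⟩ := h𝒜 E hE𝒜
        obtain ⟨p, hpF, rfl⟩ := exists_eq_insert_iff.mpr ⟨hFE, hcard⟩
        exact mem_image.mpr ⟨p, mem_sdiff.mpr ⟨hEP (mem_insert_self p F), hpF⟩, rfl⟩
    _ ≤ #(P \ F) := card_image_le

lemma card_mul_succ_le_card_mul_of_erase_mem (h𝒜 : ∀ E ∈ 𝒜, E ⊆ P ∧ #E = r + 1)
    (hℬ : ∀ F ∈ ℬ, F ⊆ P ∧ #F = r) (hdown : ∀ E ∈ 𝒜, ∀ p ∈ E, E.erase p ∈ ℬ) :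
    #𝒜 * (r + 1) ≤ #ℬ * (#P - r) := by
  refine card_mul_le_card_mul (fun E F => F ⊆ E) (fun E hE => ?_) (fun F hF => ?_)
  · exact (h𝒜 E hE).2 ▸ card_le_card_filter_subset_of_erase_mem (hdown E hE)
  · obtain ⟨hFP, hFr⟩ := hℬ F hF
    calc #{E ∈ 𝒜 | F ⊆ E} ≤ #(P \ F) :=
          card_filter_superset_le fun E hE => ⟨(h𝒜 E hE).1, by rw [hFr, (h𝒜 E hE).2]⟩
      _ = #P - r := by rw [card_sdiff_of_subset hFP, hFr]

lemma card_mul_le_card_mul_succ_of_insert_mem (hℬ : ∀ F ∈ ℬ, F ⊆ P ∧ #F = r)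
    (h𝒞 : ∀ E ∈ 𝒞, #E = r + 1) (hup : ∀ F ∈ ℬ, ∀ p ∈ P, p ∉ F → insert p F ∈ 𝒞) :
    #ℬ * (#P - r) ≤ #𝒞 * (r + 1) := by
  refine card_mul_le_card_mul (fun F E => F ⊆ E) (fun F hF => ?_) (fun E hE => ?_)
  · obtain ⟨hFP, hFr⟩ := hℬ F hF
    calc #P - r = #(P \ F) := by rw [card_sdiff_of_subset hFP, hFr]
      _ ≤ #{E ∈ 𝒞 | F ⊆ E} := card_sdiff_le_card_filter_superset_of_insert_mem (hup F hF)
  · exact h𝒞 E hE ▸ card_filter_subset_le fun F hF => by rw [(hℬ F hF).2, h𝒞 E hE]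

lemma card_div_choose_succ_le_of_erase_mem (hr : r < #P) (h𝒜 : ∀ E ∈ 𝒜, E ⊆ P ∧ #E = r + 1)
    (hℬ : ∀ F ∈ ℬ, F ⊆ P ∧ #F = r) (hdown : ∀ E ∈ 𝒜, ∀ p ∈ E, E.erase p ∈ ℬ) :
    (#𝒜 : ℝ) / (#P).choose (r + 1) ≤ #ℬ / (#P).choose r := by
  rw [div_le_div_iff_of_mul_eq (s := ((r + 1 : ℕ) : ℝ)) (w := ((#P - r : ℕ) : ℝ))
    (by exact_mod_cast Nat.choose_pos hr) (by exact_mod_cast Nat.choose_pos hr.le)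
    (by exact_mod_cast Nat.sub_pos_of_lt hr) (by exact_mod_cast Nat.choose_succ_right_eq _ _)]
  exact_mod_cast card_mul_succ_le_card_mul_of_erase_mem h𝒜 hℬ hdown

lemma card_div_choose_le_of_insert_mem (hr : r < #P) (hℬ : ∀ F ∈ ℬ, F ⊆ P ∧ #F = r)
    (h𝒞 : ∀ E ∈ 𝒞, #E = r + 1) (hup : ∀ F ∈ ℬ, ∀ p ∈ P, p ∉ F → insert p F ∈ 𝒞) :
    (#ℬ : ℝ) / (#P).choose r ≤ #𝒞 / (#P).choose (r + 1) := by
  rw [div_le_div_iff_of_mul_eq (s := ((#P - r : ℕ) : ℝ)) (w := ((r + 1 : ℕ) : ℝ))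
    (by exact_mod_cast Nat.choose_pos hr.le) (by exact_mod_cast Nat.choose_pos hr)
    (by positivity) (by exact_mod_cast (Nat.choose_succ_right_eq _ _).symm)]
  exact_mod_cast card_mul_le_card_mul_succ_of_insert_mem hℬ h𝒞 hup

end Finset

lemma alternating_of_interlaced {n : ℕ} {a a' σ τ : ℕ → ℝ}
    (hshrink : ∀ r < n, a (r + 1) ≤ a r) (hgrow : ∀ r < n, a r ≤ a' (r + 1))
    (hσ : ∀ i, 1 ≤ i → i ≤ n → σ i = if Odd i then a i else a' i)
    (hτ : ∀ i, 1 ≤ i → i ≤ n → τ i = if Even i then a i else a' i) :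
    ∀ t : ℕ, 1 ≤ t →
      (2 * t ≤ n → σ (2 * t - 1) ≤ σ (2 * t) ∧ τ (2 * t) ≤ τ (2 * t - 1)) ∧
      (2 * t + 1 ≤ n → σ (2 * t + 1) ≤ σ (2 * t) ∧ τ (2 * t) ≤ τ (2 * t + 1)) := by
  intro t ht
  obtain ⟨s, rfl⟩ : ∃ s, t = s + 1 := ⟨t - 1, by omega⟩
  rw [show 2 * (s + 1) - 1 = 2 * s + 1 by omega, show 2 * (s + 1) = 2 * s + 1 + 1 by ring]
  have h₁ : Odd (2 * s + 1) := odd_two_mul_add_one s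
  have h₂ : Even (2 * s + 1 + 1) := h₁.add_one
  have h₃ : Odd (2 * s + 1 + 1 + 1) := h₂.add_one
  have hle (r) (hr : r < n) : a (r + 1) ≤ a' (r + 1) := (hshrink r hr).trans (hgrow r hr)
  refine ⟨fun h => ?_, fun h => ?_⟩
  · rw [hσ (2 * s + 1) (by omega) (by omega), hσ (2 * s + 1 + 1) (by omega) h,
      hτ (2 * s + 1) (by omega) (by omega), hτ (2 * s + 1 + 1) (by omega) h]
    simp only [h₁, h₂, Nat.not_even_iff_odd.mpr h₁, Nat.not_odd_iff_even.mpr h₂, if_true, if_false]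
    exact ⟨hgrow _ (by omega), (hshrink _ (by omega)).trans (hle _ (by omega))⟩
  · rw [hσ (2 * s + 1 + 1 + 1) (by omega) h, hσ (2 * s + 1 + 1) (by omega) (by omega),
      hτ (2 * s + 1 + 1 + 1) (by omega) h, hτ (2 * s + 1 + 1) (by omega) (by omega)]
    simp only [h₂, h₃, Nat.not_even_iff_odd.mpr h₃, Nat.not_odd_iff_even.mpr h₂, if_true, if_false]
    exact ⟨(hshrink _ (by omega)).trans (hle _ (by omega)), hgrow _ (by omega)⟩

theorem alternating_proportions_general {γ : Type*} [DecidableEq γ]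
    (P : Finset γ) (M : ℕ) (hPM : P.card = M)
    (A A' : ℕ → Finset (Finset γ))
    (hAsub : ∀ i, i ≤ M → ∀ E ∈ A i, E ⊆ P ∧ E.card = i)
    (hA'sub : ∀ i, i ≤ M → ∀ E ∈ A' i, E ⊆ P ∧ E.card = i)
    (hAdown : ∀ i, 1 ≤ i → i ≤ M → ∀ E ∈ A i, ∀ p ∈ E, E.erase p ∈ A (i - 1))
    (hA'up : ∀ i, 1 ≤ i → i ≤ M → ∀ F ∈ A (i - 1), ∀ p ∈ P, p ∉ F → insert p F ∈ A' i)
    (σ τ : ℕ → ℝ)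
    (hσ : ∀ i, 1 ≤ i → i ≤ M →
      σ i * (M.choose i) = if Odd i then ((A i).card : ℝ) else ((A' i).card : ℝ))
    (hτ : ∀ i, 1 ≤ i → i ≤ M →
      τ i * (M.choose i) = if Even i then ((A i).card : ℝ) else ((A' i).card : ℝ)) :
    ∀ t : ℕ, 1 ≤ t →
      (2 * t ≤ M → σ (2 * t - 1) ≤ σ (2 * t) ∧ τ (2 * t) ≤ τ (2 * t - 1)) ∧
      (2 * t + 1 ≤ M → σ (2 * t + 1) ≤ σ (2 * t) ∧ τ (2 * t) ≤ τ (2 * t + 1)) := by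
  subst hPM
  have hdown (r) (hr : r < #P) : ∀ E ∈ A (r + 1), ∀ p ∈ E, E.erase p ∈ A r := by
    simpa using hAdown (r + 1) (by omega) hr
  have hup (r) (hr : r < #P) : ∀ F ∈ A r, ∀ p ∈ P, p ∉ F → insert p F ∈ A' (r + 1) := by
    simpa using hA'up (r + 1) (by omega) hr
  refine alternating_of_interlaced (a := fun i => #(A i) / (#P).choose i)
    (a' := fun i => #(A' i) / (#P).choose i)
    (fun r hr => card_div_choose_succ_le_of_erase_mem hr (hAsub _ hr) (hAsub _ hr.le) (hdown r hr))
    (fun r hr => card_div_choose_le_of_insert_mem hr (hAsub _ hr.le)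
      (fun E hE => (hA'sub _ hr E hE).2) (hup r hr))
    (fun i h1 h2 => ?_) (fun i h1 h2 => ?_)
  · rw [eq_div_of_mul_eq (by exact_mod_cast (Nat.choose_pos h2).ne') (hσ i h1 h2), ite_div]
  · rw [eq_div_of_mul_eq (by exact_mod_cast (Nat.choose_pos h2).ne') (hτ i h1 h2), ite_div]

theorem alternating_proportions {γ : Type*} [DecidableEq γ]
    (P : Finset γ) (M : ℕ) (hPM : P.card = M) (hM : 1 ≤ M)
    (A A' : ℕ → Finset (Finset γ))
    (hAsub : ∀ i, i ≤ M → ∀ E ∈ A i, E ⊆ P ∧ E.card = i)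
    (hA'sub : ∀ i, i ≤ M → ∀ E ∈ A' i, E ⊆ P ∧ E.card = i)
    (hAdown : ∀ i, 1 ≤ i → i ≤ M → ∀ E ∈ A i, ∀ p ∈ E, E.erase p ∈ A (i - 1))
    (hA'up : ∀ i, 1 ≤ i → i ≤ M → ∀ F ∈ A (i - 1), ∀ p ∈ P, p ∉ F → insert p F ∈ A' i)
    (σ τ : ℕ → ℝ)
    (hσ : ∀ i, 1 ≤ i → i ≤ M →
      σ i * (M.choose i) = if Odd i then ((A i).card : ℝ) else ((A' i).card : ℝ))
    (hτ : ∀ i, 1 ≤ i → i ≤ M →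
      τ i * (M.choose i) = if Even i then ((A i).card : ℝ) else ((A' i).card : ℝ)) :
    ∀ t : ℕ, 1 ≤ t →
      (2 * t ≤ M → σ (2 * t - 1) ≤ σ (2 * t) ∧ τ (2 * t) ≤ τ (2 * t - 1)) ∧
      (2 * t + 1 ≤ M → σ (2 * t + 1) ≤ σ (2 * t) ∧ τ (2 * t) ≤ τ (2 * t + 1)) :=
  alternating_proportions_general P M hPM A A' hAsub hA'sub hAdown hA'up σ τ hσ hτ
end

section
/- Let λ ≥ 0 be a real number and k ≥ 1 an integer. Then e^{-λ} · Σ_{j=k}^∞ λ^j / j! = Σ_{h=k}^∞ (-1)^{h-k} · C(h-1, k-1) · λ^h / h!, and the series on the right-hand side converges absolutely. -/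
/-!
The left-hand side is the Cauchy product of `e^{-λ} = ∑ (-λ)^i / i!` with the tail
`∑_{j ≥ k} λ^j / j!`. Its `n`-th coefficient is `λ^n / n!` times the partial alternating sum
`∑_{i ≤ n - k} (-1)^i C(n, i) = (-1)^(n-k) C(n - 1, n - k)`, and `C(n - 1, n - k) = C(n - 1, k - 1)`.
Both factors converge absolutely, hence so does the product.
-/

open Finset Nat

noncomputable def expTailTerm (k : ℕ) (x : ℝ) (j : ℕ) : ℝ :=
  if k ≤ j then x ^ j / j ! else 0

noncomputable def alternatingTailTerm (k : ℕ) (x : ℝ) (h : ℕ) : ℝ :=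
  if k ≤ h then (-1) ^ (h - k) * ((h - 1).choose (k - 1)) * x ^ h / h ! else 0

lemma summable_norm_expTailTerm (k : ℕ) (x : ℝ) : Summable fun j => ‖expTailTerm k x j‖ := by
  refine (Real.summable_pow_div_factorial |x|).of_nonneg_of_le (fun _ => norm_nonneg _) fun j => ?_
  unfold expTailTerm
  split_ifs
  · simp
  · simp only [norm_zero]
    positivity

lemma summable_norm_neg_pow_div_factorial (x : ℝ) :
    Summable fun i => ‖(-x) ^ i / (i ! : ℝ)‖ :=
  (Real.summable_pow_div_factorial |x|).congr fun i => by simp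

lemma sum_range_neg_one_pow_mul_choose (n m : ℕ) :
    ∑ i ∈ range (m + 1), (-1 : ℝ) ^ i * (n + 1).choose i = (-1) ^ m * n.choose m := by
  exact_mod_cast Int.alternating_sum_range_choose_eq_choose

lemma neg_pow_div_factorial_mul_pow_div_factorial (x : ℝ) (i j : ℕ) :
    (-x) ^ i / i ! * (x ^ j / j !) = (-1) ^ i * (i + j).choose i * (x ^ (i + j) / (i + j)!) := by
  rw [Nat.cast_choose ℝ (Nat.le_add_right i j), Nat.add_sub_cancel_left, neg_pow]
  field_simp
  ring

lemma sum_antidiagonal_neg_pow_div_factorial_mul_expTailTerm {k : ℕ} (hk : 1 ≤ k) (x : ℝ)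
    (n : ℕ) :
    ∑ p ∈ antidiagonal n, (-x) ^ p.1 / (p.1 ! : ℝ) * expTailTerm k x p.2 =
      alternatingTailTerm k x n := by
  rw [Nat.sum_antidiagonal_eq_sum_range_succ_mk]
  by_cases hkn : k ≤ n
  · obtain ⟨k, rfl⟩ := Nat.exists_eq_add_of_le' hk
    obtain ⟨m, rfl⟩ : ∃ m, n = m + k + 1 := ⟨n - (k + 1), by omega⟩
    have hterm : ∀ i ∈ range (m + k + 1 + 1),
        (-x) ^ i / (i ! : ℝ) * expTailTerm (k + 1) x (m + k + 1 - i) =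
          if i ∈ range (m + 1) then
            (-1) ^ i * (m + k + 1).choose i * (x ^ (m + k + 1) / (m + k + 1)!) else 0 := by
      intro i hi
      simp only [mem_range] at hi ⊢
      unfold expTailTerm
      split_ifs
      · have := neg_pow_div_factorial_mul_pow_div_factorial x i (m + k + 1 - i)
        rwa [Nat.add_sub_cancel' (by omega)] at this
      · omega
      · omega
      · simp
    rw [sum_congr rfl hterm, sum_ite_mem, inter_eq_right.mpr (range_subset_range.mpr (by omega)),
      ← sum_mul, sum_range_neg_one_pow_mul_choose, Nat.choose_symm_add]
    simp [alternatingTailTerm, mul_div_assoc]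
  · have hzero : ∀ i ∈ range (n + 1), (-x) ^ i / (i ! : ℝ) * expTailTerm k x (n - i) = 0 :=
      fun i _ => by simp [expTailTerm, show ¬k ≤ n - i by omega]
    simp [sum_eq_zero hzero, alternatingTailTerm, hkn]

theorem poisson_tail_alternating_series_general (lam : ℝ) (k : ℕ) (hk : 1 ≤ k) :
    (Summable fun h : ℕ =>
      |if k ≤ h then (-1 : ℝ) ^ (h - k) * ((h - 1).choose (k - 1)) * lam ^ h /
        (Nat.factorial h) else 0|) ∧
    Real.exp (-lam) * (∑' j : ℕ, if k ≤ j then lam ^ j / (Nat.factorial j) else 0) =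
      ∑' h : ℕ, if k ≤ h then (-1 : ℝ) ^ (h - k) * ((h - 1).choose (k - 1)) * lam ^ h /
        (Nat.factorial h) else 0 := by
  have hexp := summable_norm_neg_pow_div_factorial lam
  have htail := summable_norm_expTailTerm k lam
  have hcoeff := sum_antidiagonal_neg_pow_div_factorial_mul_expTailTerm hk lam
  change Summable (fun h => ‖alternatingTailTerm k lam h‖) ∧
    Real.exp (-lam) * ∑' j, expTailTerm k lam j = ∑' h, alternatingTailTerm k lam h
  refine ⟨(summable_norm_sum_mul_antidiagonal_of_summable_norm hexp htail).congr
    fun n => by rw [hcoeff], ?_⟩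
  rw [Real.exp_eq_exp_ℝ, NormedSpace.exp_eq_tsum_div,
    tsum_mul_tsum_eq_tsum_sum_antidiagonal_of_summable_norm hexp htail]
  exact tsum_congr hcoeff

theorem poisson_tail_alternating_series (lam : ℝ) (hlam : 0 ≤ lam) (k : ℕ) (hk : 1 ≤ k) :
    (Summable fun h : ℕ =>
      |if k ≤ h then (-1 : ℝ) ^ (h - k) * ((h - 1).choose (k - 1)) * lam ^ h /
        (Nat.factorial h) else 0|) ∧
    Real.exp (-lam) * (∑' j : ℕ, if k ≤ j then lam ^ j / (Nat.factorial j) else 0) =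
      ∑' h : ℕ, if k ≤ h then (-1 : ℝ) ^ (h - k) * ((h - 1).choose (k - 1)) * lam ^ h /
        (Nat.factorial h) else 0 :=
  poisson_tail_alternating_series_general lam k hk
end

section
/- Let C = 0.05. There exists an integer n_0 such that for all integers n ≥ n_0, the following holds: let α ∈ {n-1, n-2}, let k ≥ 1 be an integer and V > 0 a real number with k ≤ Cα and V ≤ Cα, suppose α - k is odd, and write λ = V/2. Then | Σ_{h=k}^{α} (-1)^{h-k} · C(h-1, k-1) · λ^h / h! - Q(λ, k) | < e^{-n} · Q(λ, k). -/
open MeasureTheory Matrix Metric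
open scoped Classical

noncomputable section

/-- `Qtail λ k` is the upper tail of the Poisson distribution with mean `λ` evaluated at `k`,
i.e. `Q(λ, k) = e^{-λ} Σ_{j ≥ k} λ^j / j!`. -/
def Qtail (l : ℝ) (k : ℕ) : ℝ :=
  Real.exp (-l) * ∑' j : ℕ, if k ≤ j then l ^ j / (Nat.factorial j) else 0


open Finset Real
open scoped Nat

/-!
The Cauchy product of `e^{-λ} = Σ (-λ)^i / i!` with `Σ_{j ≥ k} λ^j / j!` gives, for `k ≥ 1`,
`Q(λ, k) = Σ_{h ≥ k} (-1)^{h-k} C(h-1, k-1) λ^h / h!`: the coefficient of `λ^h / h!` is a partial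
alternating sum of binomial coefficients. So the sum in question is a truncation of this series,
and as its coefficients are at most `2^h` in absolute value, the error is at most
`(2λ)^β e^{2λ} / β!` with `β = α + 1`. Against `Q(λ, k) ≥ e^{-λ} λ^k / k!`, using `k! (β-k)! ≤ β!`
and `λ^{β-k} / (β-k)! ≤ e^{40λ} / 40^{β-k}`, the relative error is at most
`2^β e^{n + 43λ} / 40^{β-k}`, which is below `1` as `λ ≤ β/40`, `k ≤ β/20` and `n ≤ β + 1`.
-/

def poissonTailCoeff (k h : ℕ) : ℝ :=
  if k ≤ h then (-1) ^ (h - k) * ((h - 1).choose (k - 1) : ℝ) else 0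

lemma abs_poissonTailCoeff_le (k h : ℕ) : |poissonTailCoeff k h| ≤ 2 ^ h := by
  unfold poissonTailCoeff
  split_ifs
  · rw [abs_mul, abs_pow, abs_neg, abs_one, one_pow, one_mul, Nat.abs_cast]
    exact_mod_cast (Nat.choose_le_two_pow _ _).trans (Nat.pow_le_pow_right two_pos (h.sub_le 1))
  · simp

lemma sum_range_ite_neg_one_pow_mul_choose {k : ℕ} (hk : 1 ≤ k) (h : ℕ) :
    ∑ i ∈ range (h + 1), (if k ≤ h - i then (-1) ^ i * (h.choose i : ℝ) else 0) =
      poissonTailCoeff k h := by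
  unfold poissonTailCoeff
  split_ifs with hkh
  · obtain ⟨n, rfl⟩ : ∃ n, h = n + 1 := ⟨h - 1, by omega⟩
    have hfilter :
        (range (n + 1 + 1)).filter (fun i => k ≤ n + 1 - i) = range (n + 1 - k + 1) := by
      ext i
      simp only [mem_filter, mem_range]
      omega
    have hsymm : n.choose (n + 1 - k) = n.choose (k - 1) := Nat.choose_symm_of_eq_add (by omega)
    rw [← sum_filter, hfilter, Nat.add_sub_cancel, ← hsymm]
    exact_mod_cast Int.alternating_sum_range_choose_eq_choose
  · exact sum_eq_zero fun i _ => if_neg (by omega)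

lemma summable_norm_ite_pow_div_factorial (k : ℕ) (x : ℝ) :
    Summable fun j => ‖if k ≤ j then x ^ j / (j ! : ℝ) else 0‖ := by
  refine (NormedSpace.norm_expSeries_div_summable (𝔸 := ℝ) x).of_nonneg_of_le
    (fun _ => norm_nonneg _) fun j => ?_
  split_ifs
  · exact le_rfl
  · exact (norm_zero (E := ℝ)).trans_le (norm_nonneg _)

theorem Qtail_eq_tsum {k : ℕ} (hk : 1 ≤ k) (x : ℝ) :
    Qtail x k = ∑' h, poissonTailCoeff k h * x ^ h / h ! := by
  rw [Qtail, Real.exp_eq_exp_ℝ, NormedSpace.exp_eq_tsum_div,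
    tsum_mul_tsum_eq_tsum_sum_range_of_summable_norm
      (NormedSpace.norm_expSeries_div_summable (𝔸 := ℝ) _)
      (summable_norm_ite_pow_div_factorial k x)]
  refine tsum_congr fun h => ?_
  rw [← sum_range_ite_neg_one_pow_mul_choose hk h, sum_mul, sum_div]
  refine sum_congr rfl fun i hi => ?_
  have hih : i ≤ h := Nat.lt_succ_iff.mp (mem_range.mp hi)
  split_ifs
  · rw [neg_pow, Nat.cast_choose ℝ hih, ← pow_mul_pow_sub x hih]
    field_simp
  · simp

lemma tsum_pow_div_factorial_nat_add_le {x : ℝ} (hx : 0 ≤ x) (N : ℕ) :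
    ∑' i, x ^ (i + N) / (i + N)! ≤ x ^ N / N ! * exp x := by
  have hterm (i : ℕ) : x ^ (i + N) / (i + N)! ≤ x ^ N / N ! * (x ^ i / i !) := by
    have hfac : (N ! * i ! : ℝ) ≤ (i + N)! := by
      exact_mod_cast Nat.le_of_dvd (Nat.factorial_pos _)
        (add_comm N i ▸ Nat.factorial_mul_factorial_dvd_factorial_add N i)
    calc x ^ (i + N) / (i + N)! ≤ x ^ (i + N) / (N ! * i !) := by gcongr
      _ = x ^ N / N ! * (x ^ i / i !) := by rw [pow_add]; ring
  have hsum := Real.summable_pow_div_factorial x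
  calc ∑' i, x ^ (i + N) / (i + N)!
      ≤ ∑' i, x ^ N / N ! * (x ^ i / i !) :=
        Summable.tsum_le_tsum hterm ((summable_nat_add_iff N).mpr hsum) (hsum.mul_left _)
    _ = x ^ N / N ! * exp x := by
        rw [tsum_mul_left, Real.exp_eq_exp_ℝ, NormedSpace.exp_eq_tsum_div]

theorem abs_Qtail_sub_sum_range_le {k : ℕ} (hk : 1 ≤ k) {x : ℝ} (hx : 0 ≤ x) (N : ℕ) :
    |Qtail x k - ∑ h ∈ range N, poissonTailCoeff k h * x ^ h / h !| ≤
      (2 * x) ^ N / N ! * exp (2 * x) := by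
  set a : ℕ → ℝ := fun h => poissonTailCoeff k h * x ^ h / (h ! : ℝ)
  have ha (h : ℕ) : ‖a h‖ ≤ (2 * x) ^ h / (h ! : ℝ) := by
    rw [Real.norm_eq_abs, abs_div, abs_mul, abs_pow, abs_of_nonneg hx, Nat.abs_cast, mul_pow]
    gcongr
    exact abs_poissonTailCoeff_le k h
  have hsum : Summable fun h => ‖a h‖ :=
    (Real.summable_pow_div_factorial (2 * x)).of_nonneg_of_le (fun _ => norm_nonneg _) ha
  rw [Qtail_eq_tsum hk, ← hsum.of_norm.sum_add_tsum_nat_add N, add_sub_cancel_left,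
    ← Real.norm_eq_abs]
  calc ‖∑' i, a (i + N)‖
      ≤ ∑' i, ‖a (i + N)‖ := norm_tsum_le_tsum_norm ((summable_nat_add_iff N).mpr hsum)
    _ ≤ ∑' i, (2 * x) ^ (i + N) / (i + N)! :=
        Summable.tsum_le_tsum (fun i => ha (i + N)) ((summable_nat_add_iff N).mpr hsum)
          ((summable_nat_add_iff (f := fun h => (2 * x) ^ h / (h ! : ℝ)) N).mpr
            (Real.summable_pow_div_factorial _))
    _ ≤ (2 * x) ^ N / N ! * exp (2 * x) := tsum_pow_div_factorial_nat_add_le (by positivity) N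

lemma sum_Icc_eq_sum_range_poissonTailCoeff (k α : ℕ) (x : ℝ) :
    ∑ h ∈ Icc k α, (-1 : ℝ) ^ (h - k) * ((h - 1).choose (k - 1)) * x ^ h / h ! =
      ∑ h ∈ range (α + 1), poissonTailCoeff k h * x ^ h / h ! := by
  simp only [poissonTailCoeff, ite_mul, zero_mul, ite_div, zero_div]
  rw [← sum_filter]
  congr 1
  ext h
  simp only [mem_Icc, mem_filter, mem_range]
  omega

lemma exp_neg_mul_pow_div_factorial_le_Qtail {x : ℝ} (hx : 0 ≤ x) (k : ℕ) :
    exp (-x) * (x ^ k / k !) ≤ Qtail x k := by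
  have hle := (summable_norm_ite_pow_div_factorial k x).of_norm.le_tsum k fun j _ => by
    split_ifs <;> positivity
  rw [if_pos le_rfl] at hle
  exact mul_le_mul_of_nonneg_left hle (exp_pos _).le

lemma exp_seven_halves_lt_forty : exp (7 / 2) < 40 := by
  have h : exp (7 / 2) ^ 2 < 40 ^ 2 := by
    rw [← exp_nat_mul, show ((2 : ℕ) : ℝ) * (7 / 2) = (7 : ℕ) by norm_num, ← exp_one_pow]
    calc exp 1 ^ 7 < 2.7182818286 ^ 7 := by gcongr; exact exp_one_lt_d9
      _ < 40 ^ 2 := by norm_num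
  exact lt_of_pow_lt_pow_left₀ 2 (by norm_num) h

lemma two_pow_mul_exp_lt_forty_pow {n β k : ℕ} {x : ℝ} (hk : 20 * k ≤ β) (hx : 40 * x ≤ β)
    (hn : n ≤ β + 1) (hβ : 5 ≤ β) :
    2 ^ β * exp (n + 43 * x) < 40 ^ (β - k) := by
  have htwo : (2 : ℝ) ≤ exp 1 := by linarith [add_one_le_exp 1]
  have hlin : (β : ℝ) + (n + 43 * x) < (β - k : ℕ) * (7 / 2) := by
    have : (20 * k : ℝ) ≤ β := by exact_mod_cast hk
    have : (n : ℝ) ≤ β + 1 := by exact_mod_cast hn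
    have : (5 : ℝ) ≤ β := by exact_mod_cast hβ
    rw [Nat.cast_sub (by omega)]
    linarith
  calc 2 ^ β * exp (n + 43 * x) ≤ exp 1 ^ β * exp (n + 43 * x) := by gcongr
    _ = exp (β + (n + 43 * x)) := by rw [← exp_nat_mul, mul_one, ← exp_add]
    _ < exp ((β - k : ℕ) * (7 / 2)) := exp_lt_exp.mpr hlin
    _ = exp (7 / 2) ^ (β - k) := exp_nat_mul _ _
    _ ≤ 40 ^ (β - k) := by gcongr; exact exp_seven_halves_lt_forty.le

lemma pow_div_factorial_mul_exp_lt {n β k : ℕ} {x : ℝ} (hx₀ : 0 < x) (hk : 20 * k ≤ β)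
    (hx : 40 * x ≤ β) (hn : n ≤ β + 1) (hβ : 5 ≤ β) :
    (2 * x) ^ β / β ! * exp (2 * x) < exp (-n) * (exp (-x) * (x ^ k / k !)) := by
  set m := β - k
  have hkβ : k ≤ β := by omega
  have hsplit : (2 * x) ^ β / β ! ≤ 2 ^ β * (x ^ k / k !) * (x ^ m / m !) := by
    have hfac : (k ! * m ! : ℝ) ≤ β ! := by
      exact_mod_cast Nat.le_of_dvd (Nat.factorial_pos _)
        (Nat.factorial_mul_factorial_dvd_factorial hkβ)
    calc (2 * x) ^ β / β ! ≤ 2 ^ β * (x ^ k * x ^ m) / (k ! * m !) := by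
          rw [pow_mul_pow_sub x hkβ, mul_pow]; gcongr
      _ = 2 ^ β * (x ^ k / k !) * (x ^ m / m !) := by ring
  have hm : x ^ m / m ! ≤ exp (40 * x) / 40 ^ m := by
    rw [le_div_iff₀ (by positivity)]
    calc x ^ m / m ! * 40 ^ m = (40 * x) ^ m / m ! := by ring
      _ ≤ exp (40 * x) := pow_div_factorial_le_exp _ (by positivity) m
  have hnum := two_pow_mul_exp_lt_forty_pow hk hx hn hβ
  have hexp : exp (n + 43 * x) = exp (40 * x) * exp (2 * x) / (exp (-n) * exp (-x)) := by
    rw [← exp_add, ← exp_add, ← exp_sub]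
    congr 1
    ring
  rw [hexp, ← mul_div_assoc, div_lt_iff₀ (by positivity)] at hnum
  calc (2 * x) ^ β / β ! * exp (2 * x)
      ≤ 2 ^ β * (x ^ k / k !) * (x ^ m / m !) * exp (2 * x) := by gcongr
    _ ≤ 2 ^ β * (x ^ k / k !) * (exp (40 * x) / 40 ^ m) * exp (2 * x) := by gcongr
    _ = (x ^ k / k !) * (2 ^ β * (exp (40 * x) * exp (2 * x))) / 40 ^ m := by ring
    _ < (x ^ k / k !) * (40 ^ m * (exp (-n) * exp (-x))) / 40 ^ m := by gcongr
    _ = exp (-n) * (exp (-x) * (x ^ k / k !)) := by field_simp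

theorem truncated_series_approximates_poisson_tail :
    ∃ n₀ : ℕ, ∀ n : ℕ, n₀ ≤ n → ∀ α k : ℕ, ∀ V : ℝ,
      (α = n - 1 ∨ α = n - 2) → 1 ≤ k → (k : ℝ) ≤ 0.05 * α → 0 < V → V ≤ 0.05 * α →
      Odd (α - k) →
      |(∑ h ∈ Finset.Icc k α,
          (-1 : ℝ) ^ (h - k) * ((h - 1).choose (k - 1)) * (V / 2) ^ h / (Nat.factorial h)) -
        Qtail (V / 2) k| < Real.exp (-(n : ℝ)) * Qtail (V / 2) k := by
  refine ⟨0, fun n _ α k V hα hk hkα hV hVα _ => ?_⟩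
  have hk20 : 20 * k ≤ α := by exact_mod_cast (by linarith : (20 * k : ℝ) ≤ α)
  have hV40 : 40 * (V / 2) ≤ (α + 1 : ℕ) := by push_cast; linarith
  rw [sum_Icc_eq_sum_range_poissonTailCoeff, abs_sub_comm]
  calc |Qtail (V / 2) k - ∑ h ∈ range (α + 1), poissonTailCoeff k h * (V / 2) ^ h / h !|
      ≤ (2 * (V / 2)) ^ (α + 1) / (α + 1)! * exp (2 * (V / 2)) :=
        abs_Qtail_sub_sum_range_le hk (by positivity) (α + 1)
    _ < exp (-n) * (exp (-(V / 2)) * ((V / 2) ^ k / k !)) :=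
        pow_div_factorial_mul_exp_lt (by positivity) (by omega) hV40 (by omega) (by omega)
    _ ≤ exp (-n) * Qtail (V / 2) k := by
        gcongr
        exact exp_neg_mul_pow_div_factorial_le_Qtail (by positivity) k
end
end

section
/- Let W be a finite set of nonzero vectors in ℝ^n with |W| = M, and let k ≥ 1 be an integer. Define P_k = (the fraction of k-element subsets of W that are linearly independent) if M ≥ k, and P_k = 0 if M < k. For h ≥ k, let S_h denote the number of h-element subsets of W of corank 0 if h - k is even and of corank ≤ 1 if h - k is odd, and let T_h denote the number of h-element subsets of W of corank ≤ 1 if h - k is even and of corank 0 if h - k is odd. Then for any integers α, β ≥ k with α - k odd and β - k even, Σ_{h=k}^{α} (-1)^{h-k} · C(h-1, k-1) · S_h ≤ P_k ≤ Σ_{h=k}^{β} (-1)^{h-k} · C(h-1, k-1) · T_h. -/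
open MeasureTheory Matrix Metric
open scoped Classical

noncomputable section

/-- The collection of `h`-element subsets of `W` consisting of linearly independent vectors. -/
def indepSubsets {n : ℕ} (h : ℕ) (W : Set (EuclideanSpace ℝ (Fin n))) :
    Set (Finset (EuclideanSpace ℝ (Fin n))) :=
  {E | ↑E ⊆ W ∧ E.card = h ∧
    LinearIndependent ℝ (fun v : (E : Set (EuclideanSpace ℝ (Fin n))) =>
      (v : EuclideanSpace ℝ (Fin n)))}

/-- The collection of `h`-element subsets of `W` of corank at most 1, i.e. whose span has
dimension at least `h - 1`. -/
def corank1Subsets {n : ℕ} (h : ℕ) (W : Set (EuclideanSpace ℝ (Fin n))) :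
    Set (Finset (EuclideanSpace ℝ (Fin n))) :=
  {E | ↑E ⊆ W ∧ E.card = h ∧
    h ≤ Module.finrank ℝ (Submodule.span ℝ (E : Set (EuclideanSpace ℝ (Fin n)))) + 1}

/-!
Write `ν E = |E| - dim span E` for the corank and `t` for the number of levels after the first
(`α - k` or `β - k`). A set `E` containing a vector `w` contains `C(|E| - 1, k - 1)` sets `K` of
size `k` with `w ∈ K`, so adding a new vector `w` to `W` adds to the series the sum, over these
`K`, of the truncated alternating sums over the intervals `[K, insert w W]`. A Bonferroni-type
induction, which only uses `ν E ≤ ν (insert a E) ≤ ν E + 1`, shows that each such interval sum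
has the sign of `(-1) ^ t` as soon as the interval is nontrivial. Building `W` from any of its
`k`-subsets `K₀` one vector at a time, the lower series is therefore at most `[ν K₀ = 0]` and the
upper one at least `[ν K₀ ≤ 1]`; averaging over `K₀` gives the bounds on `P_k`.
-/

open Finset Module Submodule

/-- The weight of a set lying `m` levels above the bottom of a sieve truncated after level `t`,
when its corank is `x`: levels of the parity of `t` count sets of corank at most one, the
others count independent sets. -/
def sieveWeight (t m x : ℕ) : ℤ :=
  if t < m then 0
  else (-1) ^ m * if m % 2 = t % 2 then (if x ≤ 1 then 1 else 0) else (if x = 0 then 1 else 0)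

theorem sieveWeight_succ_succ (t m x : ℕ) :
    sieveWeight (t + 1) (m + 1) x = -sieveWeight t m x := by
  have hpar : ((m + 1) % 2 = (t + 1) % 2) = (m % 2 = t % 2) := propext (by omega)
  simp only [sieveWeight, Nat.add_lt_add_iff_right, pow_succ, hpar]
  split_ifs <;> ring

theorem sieveWeight_zero_succ (m x : ℕ) : sieveWeight 0 (m + 1) x = 0 :=
  if_pos m.succ_pos

theorem sieveWeight_zero_zero_nonneg (x : ℕ) : 0 ≤ sieveWeight 0 0 x := by
  unfold sieveWeight
  split_ifs <;> norm_num

theorem sieveWeight_bottom (t x : ℕ) :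
    sieveWeight t 0 x = if Even t then (if x ≤ 1 then 1 else 0) else (if x = 0 then 1 else 0) := by
  simp only [sieveWeight, Nat.not_lt_zero, if_false, pow_zero, one_mul, Nat.even_iff,
    Nat.zero_mod, eq_comm]

theorem neg_one_pow_succ_mul_sieveWeight_sub_nonneg (t : ℕ) {x y : ℕ} (hyx : y ≤ x)
    (hxy : x ≤ y + 1) : 0 ≤ (-1) ^ (t + 1) * (sieveWeight (t + 1) 0 y - sieveWeight t 0 x) := by
  rw [sieveWeight_bottom, sieveWeight_bottom, pow_succ]
  rcases Nat.even_or_odd t with ht | ht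
  · rw [if_neg (Nat.not_even_iff_odd.mpr ht.add_one), if_pos ht, ht.neg_one_pow]
    split_ifs <;> omega
  · rw [if_pos ht.add_one, if_neg (Nat.not_even_iff_odd.mpr ht), ht.neg_one_pow]
    split_ifs <;> omega

section SieveSum

variable {α : Type*} [DecidableEq α] (ν : Finset α → ℕ)

def sieveSum (t : ℕ) (K G : Finset α) : ℤ :=
  ∑ F ∈ G.powerset, sieveWeight t #F (ν (K ∪ F))

theorem sieveSum_zero (K G : Finset α) : sieveSum ν 0 K G = sieveWeight 0 0 (ν K) := by
  rw [sieveSum, sum_eq_single_of_mem ∅ (empty_mem_powerset G), card_empty, union_empty]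
  intro F _ hF
  obtain ⟨m, hm⟩ := Nat.exists_eq_succ_of_ne_zero (card_ne_zero.mpr (nonempty_iff_ne_empty.mpr hF))
  rw [hm, sieveWeight_zero_succ]

theorem sieveSum_empty (t : ℕ) (K : Finset α) : sieveSum ν t K ∅ = sieveWeight t 0 (ν K) := by
  rw [sieveSum, powerset_empty, sum_singleton, card_empty, union_empty]

theorem sieveSum_insert {t : ℕ} {e : α} {G : Finset α} (K : Finset α) (he : e ∉ G) :
    sieveSum ν (t + 1) K (insert e G) =
      sieveSum ν (t + 1) K G - sieveSum ν t (insert e K) G := by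
  rw [sieveSum, sum_powerset_insert he, sieveSum, sieveSum, sub_eq_add_neg, ← sum_neg_distrib]
  congr 1
  refine sum_congr rfl fun F hF => ?_
  rw [card_insert_of_notMem (fun h => he (mem_powerset.mp hF h)), sieveWeight_succ_succ,
    union_insert, insert_union]

variable {ν}

theorem neg_one_pow_mul_sieveSum_nonneg (hmono : ∀ a s, ν s ≤ ν (insert a s))
    (hstep : ∀ a s, ν (insert a s) ≤ ν s + 1) {G : Finset α} (hG : G.Nonempty) (t : ℕ)
    (K : Finset α) : 0 ≤ (-1) ^ t * sieveSum ν t K G := by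
  induction hG using Finset.Nonempty.cons_induction generalizing t K with
  | singleton e =>
    cases t with
    | zero => simpa [sieveSum_zero] using sieveWeight_zero_zero_nonneg (ν K)
    | succ t =>
      rw [← insert_empty, sieveSum_insert ν K (notMem_empty e), sieveSum_empty, sieveSum_empty]
      exact neg_one_pow_succ_mul_sieveWeight_sub_nonneg t (hmono e K) (hstep e K)
  | cons e G he hG ih =>
    cases t with
    | zero => simpa [sieveSum_zero] using sieveWeight_zero_zero_nonneg (ν K)
    | succ t =>
      have h₁ := ih (t + 1) K
      have h₂ := ih t (insert e K)
      rw [pow_succ] at h₁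
      rw [cons_eq_insert, sieveSum_insert ν K he, pow_succ]
      linarith

end SieveSum

theorem sum_powerset_choose_smul {α β : Type*} [DecidableEq α] [AddCommMonoid β] (G : Finset α)
    (j : ℕ) (f : Finset α → β) :
    ∑ E ∈ G.powerset, (#E).choose j • f E =
      ∑ K ∈ G.powersetCard j, ∑ F ∈ (G \ K).powerset, f (K ∪ F) := by
  calc ∑ E ∈ G.powerset, (#E).choose j • f E
      = ∑ E ∈ G.powerset, ∑ K ∈ E.powersetCard j, f E := by
        simp only [sum_const, card_powersetCard]
    _ = ∑ K ∈ G.powersetCard j, ∑ E ∈ Icc K G, f E := by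
        refine sum_comm' fun E K => ?_
        simp only [mem_powerset, mem_powersetCard, mem_Icc]
        exact ⟨fun ⟨hEG, hKE, hK⟩ => ⟨⟨hKE, hEG⟩, hKE.trans hEG, hK⟩,
          fun ⟨⟨hKE, hEG⟩, _, hK⟩ => ⟨hEG, hKE, hK⟩⟩
    _ = _ := by
        refine sum_congr rfl fun K hK => ?_
        rw [Icc_eq_image_powerset (mem_powersetCard.mp hK).1, sum_image]
        have hsdiff : ∀ F ∈ (G \ K).powerset, (K ∪ F) \ K = F := fun F hF =>
          union_sdiff_cancel_left (disjoint_sdiff.mono_right (mem_powerset.mp hF))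
        intro F₁ hF₁ F₂ hF₂ h
        rw [← hsdiff F₁ hF₁, ← hsdiff F₂ hF₂]
        exact congrArg (· \ K) h

section SieveSeries

variable {α : Type*} (ν : Finset α → ℕ)

def sieveSeries (k t : ℕ) (W : Finset α) : ℤ :=
  ∑ E ∈ W.powerset,
    if k ≤ #E then ((#E - 1).choose (k - 1) : ℤ) * sieveWeight t (#E - k) (ν E) else 0

theorem sieveSeries_eq_sum_Icc (k t : ℕ) (W : Finset α) :
    sieveSeries ν k t W = ∑ h ∈ Icc k (k + t), (-1) ^ (h - k) * ((h - 1).choose (k - 1) : ℤ) *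
      if (Even (h - k) ↔ Even t) then (#{E ∈ W.powersetCard h | ν E ≤ 1} : ℤ)
      else #{E ∈ W.powersetCard h | ν E = 0} := by
  rw [sieveSeries, ← sum_filter_of_ne (p := fun E => #E ∈ Icc k (k + t)),
    ← sum_fiberwise_eq_sum_filter]
  · refine sum_congr rfl fun h hh => ?_
    rw [mem_Icc] at hh
    have hpar : (h - k) % 2 = t % 2 ↔ (Even (h - k) ↔ Even t) := by
      simp only [Nat.even_iff]; omega
    rw [← powersetCard_eq_filter]
    calc _ = ∑ E ∈ powersetCard h W, (-1) ^ (h - k) * ((h - 1).choose (k - 1) : ℤ) *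
          if (Even (h - k) ↔ Even t) then (if ν E ≤ 1 then 1 else 0)
          else (if ν E = 0 then 1 else 0) := by
          refine sum_congr rfl fun E hE => ?_
          rw [(mem_powersetCard.mp hE).2, if_pos hh.1, sieveWeight, if_neg (by omega)]
          simp only [hpar]
          ring
      _ = _ := by
          rw [← mul_sum]
          split_ifs <;> rw [sum_boole]
  · intro E _ hE
    rw [mem_Icc]
    by_contra hEt
    refine hE ?_
    unfold sieveWeight
    split_ifs <;> first | rfl | omega

theorem sieveSeries_of_card_eq (t : ℕ) (K : Finset α) :
    sieveSeries ν #K t K = sieveWeight t 0 (ν K) := by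
  rw [sieveSeries, sum_eq_single_of_mem K (mem_powerset_self K), if_pos le_rfl, Nat.sub_self,
    Nat.choose_self, Nat.cast_one, one_mul]
  intro E hE hEK
  exact if_neg (not_le.mpr (card_lt_card (ssubset_of_subset_of_ne (mem_powerset.mp hE) hEK)))

theorem sieveSeries_eq_zero_of_card_lt {k : ℕ} (t : ℕ) {W : Finset α} (hW : #W < k) :
    sieveSeries ν k t W = 0 :=
  sum_eq_zero fun E hE => if_neg (by have := card_le_card (mem_powerset.mp hE); omega)

variable [DecidableEq α]

theorem sieveSeries_insert {k : ℕ} (t : ℕ) {w : α} {W : Finset α} (hk : 1 ≤ k) (hw : w ∉ W) :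
    sieveSeries ν k t (insert w W) =
      sieveSeries ν k t W + ∑ K ∈ W.powersetCard (k - 1), sieveSum ν t (insert w K) (W \ K) := by
  rw [sieveSeries, sum_powerset_insert hw, ← sieveSeries]
  congr 1
  calc _ = ∑ E ∈ W.powerset,
        (#E).choose (k - 1) • sieveWeight t (#E + 1 - k) (ν (insert w E)) := by
        refine sum_congr rfl fun E hE => ?_
        rw [card_insert_of_notMem (fun h => hw (mem_powerset.mp hE h)), nsmul_eq_mul,
          Nat.add_sub_cancel]
        split_ifs with h
        · rfl
        · rw [Nat.choose_eq_zero_of_lt (by omega), Nat.cast_zero, zero_mul]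
    _ = _ := by
        rw [sum_powerset_choose_smul]
        refine sum_congr rfl fun K hK => sum_congr rfl fun F hF => ?_
        have hKF : Disjoint K F := disjoint_sdiff.mono_right (mem_powerset.mp hF)
        rw [card_union_of_disjoint hKF, (mem_powersetCard.mp hK).2, insert_union]
        congr 1
        omega

variable {ν}

theorem neg_one_pow_mul_sieveSeries_insert_sub_nonneg (hmono : ∀ a s, ν s ≤ ν (insert a s))
    (hstep : ∀ a s, ν (insert a s) ≤ ν s + 1) {k : ℕ} (t : ℕ) {w : α} {W : Finset α}
    (hk : 1 ≤ k) (hw : w ∉ W) (hkW : k ≤ #W) :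
    0 ≤ (-1) ^ t * (sieveSeries ν k t (insert w W) - sieveSeries ν k t W) := by
  rw [sieveSeries_insert ν t hk hw, add_sub_cancel_left, mul_sum]
  refine sum_nonneg fun K hK => neg_one_pow_mul_sieveSum_nonneg hmono hstep ?_ t _
  rw [sdiff_nonempty]
  intro hWK
  have := card_le_card hWK
  have := (mem_powersetCard.mp hK).2
  omega

theorem neg_one_pow_mul_sieveSeries_sub_nonneg_of_subset (hmono : ∀ a s, ν s ≤ ν (insert a s))
    (hstep : ∀ a s, ν (insert a s) ≤ ν s + 1) {k : ℕ} (t : ℕ) {K W : Finset α} (hk : 1 ≤ k)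
    (hkK : k ≤ #K) (hKW : K ⊆ W) :
    0 ≤ (-1) ^ t * (sieveSeries ν k t W - sieveSeries ν k t K) := by
  suffices ∀ D, Disjoint K D →
      0 ≤ (-1) ^ t * (sieveSeries ν k t (K ∪ D) - sieveSeries ν k t K) by
    simpa [union_sdiff_of_subset hKW] using this (W \ K) disjoint_sdiff
  intro D hKD
  induction D using Finset.induction_on with
  | empty => simp
  | insert w D hwD ih =>
    have hw : w ∉ K ∪ D := by
      simpa [hwD] using fun hwK => disjoint_left.mp hKD hwK (mem_insert_self w D)
    have h₁ := neg_one_pow_mul_sieveSeries_insert_sub_nonneg hmono hstep t hk hw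
      (hkK.trans (card_le_card subset_union_left))
    have h₂ := ih (hKD.mono_right (subset_insert w D))
    rw [union_insert]
    linarith [mul_sub ((-1 : ℤ) ^ t) (sieveSeries ν k t (insert w (K ∪ D)))
      (sieveSeries ν k t (K ∪ D))]

theorem sieveSeries_le_of_odd (hmono : ∀ a s, ν s ≤ ν (insert a s))
    (hstep : ∀ a s, ν (insert a s) ≤ ν s + 1) {t : ℕ} (ht : Odd t) {K W : Finset α}
    (hK : 1 ≤ #K) (hKW : K ⊆ W) : sieveSeries ν #K t W ≤ if ν K = 0 then 1 else 0 := by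
  have h := neg_one_pow_mul_sieveSeries_sub_nonneg_of_subset hmono hstep t hK le_rfl hKW
  rw [sieveSeries_of_card_eq, sieveWeight_bottom, if_neg (Nat.not_even_iff_odd.mpr ht),
    ht.neg_one_pow] at h
  linarith

theorem le_sieveSeries_of_even (hmono : ∀ a s, ν s ≤ ν (insert a s))
    (hstep : ∀ a s, ν (insert a s) ≤ ν s + 1) {t : ℕ} (ht : Even t) {K W : Finset α}
    (hK : 1 ≤ #K) (hKW : K ⊆ W) : (if ν K ≤ 1 then 1 else 0) ≤ sieveSeries ν #K t W := by
  have h := neg_one_pow_mul_sieveSeries_sub_nonneg_of_subset hmono hstep t hK le_rfl hKW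
  rw [sieveSeries_of_card_eq, sieveWeight_bottom, if_pos ht, ht.neg_one_pow] at h
  linarith

theorem choose_mul_sieveSeries_le (hmono : ∀ a s, ν s ≤ ν (insert a s))
    (hstep : ∀ a s, ν (insert a s) ≤ ν s + 1) {k t : ℕ} (hk : 1 ≤ k) (ht : Odd t)
    (W : Finset α) :
    (#W).choose k * sieveSeries ν k t W ≤ #{K ∈ W.powersetCard k | ν K = 0} := by
  rw [← card_powersetCard, ← nsmul_eq_mul, ← sum_const, natCast_card_filter]
  refine sum_le_sum fun K hK => ?_
  obtain ⟨hKW, rfl⟩ := mem_powersetCard.mp hK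
  exact sieveSeries_le_of_odd hmono hstep ht hk hKW

theorem card_le_choose_mul_sieveSeries (hmono : ∀ a s, ν s ≤ ν (insert a s))
    (hstep : ∀ a s, ν (insert a s) ≤ ν s + 1) {k t : ℕ} (hk : 1 ≤ k) (ht : Even t)
    (W : Finset α) :
    #{K ∈ W.powersetCard k | ν K ≤ 1} ≤ (#W).choose k * sieveSeries ν k t W := by
  rw [← card_powersetCard, ← nsmul_eq_mul, ← sum_const, natCast_card_filter]
  refine sum_le_sum fun K hK => ?_
  obtain ⟨hKW, rfl⟩ := mem_powersetCard.mp hK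
  exact le_sieveSeries_of_even hmono hstep ht hk hKW

end SieveSeries

section Corank

variable (𝕜 : Type*) {V : Type*} [DivisionRing 𝕜] [AddCommGroup V] [Module 𝕜 V]

def corank (s : Finset V) : ℕ := #s - Set.finrank 𝕜 (s : Set V)

theorem corank_eq_zero_iff {s : Finset V} :
    corank 𝕜 s = 0 ↔ LinearIndependent 𝕜 (fun v : (s : Set V) => (v : V)) := by
  have hcard : Fintype.card (s : Set V) = #s := Fintype.card_coe s
  rw [linearIndependent_iff_card_eq_finrank_span, Subtype.range_coe, hcard]
  have := finrank_span_finset_le_card (R := 𝕜) s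
  unfold corank
  omega

theorem corank_le_one_iff {s : Finset V} :
    corank 𝕜 s ≤ 1 ↔ #s ≤ finrank 𝕜 (span 𝕜 (s : Set V)) + 1 := by
  unfold corank Set.finrank
  omega

variable [DecidableEq V]

theorem finrank_span_insert_le (a : V) (s : Finset V) :
    Set.finrank 𝕜 ((insert a s : Finset V) : Set V) ≤ Set.finrank 𝕜 (s : Set V) + 1 := by
  have ha : finrank 𝕜 (𝕜 ∙ a) ≤ 1 := by
    simpa using finrank_span_le_card (R := 𝕜) ({a} : Set V)
  have := finrank_add_le_finrank_add_finrank (𝕜 ∙ a) (span 𝕜 (s : Set V))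
  rw [← span_insert, ← coe_insert] at this
  unfold Set.finrank
  omega

theorem corank_le_corank_insert (a : V) (s : Finset V) :
    corank 𝕜 s ≤ corank 𝕜 (insert a s) := by
  by_cases ha : a ∈ s
  · rw [insert_eq_of_mem ha]
  · have := finrank_span_insert_le 𝕜 a s
    unfold corank
    rw [card_insert_of_notMem ha]
    omega

theorem corank_insert_le (a : V) (s : Finset V) : corank 𝕜 (insert a s) ≤ corank 𝕜 s + 1 := by
  have h₁ : Set.finrank 𝕜 (s : Set V) ≤ Set.finrank 𝕜 ((insert a s : Finset V) : Set V) :=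
    finrank_mono (span_mono (coe_subset.mpr (subset_insert a s)))
  have h₂ := finrank_span_finset_le_card (R := 𝕜) s
  have h₃ := card_insert_le a s
  unfold corank
  omega

end Corank

theorem ncard_indepSubsets {n : ℕ} (h : ℕ) (W : Finset (EuclideanSpace ℝ (Fin n))) :
    (indepSubsets h (W : Set (EuclideanSpace ℝ (Fin n)))).ncard =
      #{E ∈ W.powersetCard h | corank ℝ E = 0} := by
  rw [← Set.ncard_coe_finset]
  congr 1
  ext E
  simp [indepSubsets, mem_powersetCard, corank_eq_zero_iff, and_assoc]

theorem ncard_corank1Subsets {n : ℕ} (h : ℕ) (W : Finset (EuclideanSpace ℝ (Fin n))) :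
    (corank1Subsets h (W : Set (EuclideanSpace ℝ (Fin n)))).ncard =
      #{E ∈ W.powersetCard h | corank ℝ E ≤ 1} := by
  rw [← Set.ncard_coe_finset]
  congr 1
  ext E
  simp only [corank1Subsets, Set.mem_ofPred_eq, coe_filter, mem_powersetCard, coe_subset,
    corank_le_one_iff]
  constructor
  · rintro ⟨hEW, rfl, hE⟩
    exact ⟨⟨hEW, rfl⟩, hE⟩
  · rintro ⟨⟨hEW, rfl⟩, hE⟩
    exact ⟨hEW, rfl, hE⟩

theorem sieveSeries_corank_eq {n : ℕ} (W : Finset (EuclideanSpace ℝ (Fin n))) {k γ : ℕ}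
    (hkγ : k ≤ γ) :
    (sieveSeries (corank ℝ) k (γ - k) W : ℝ) =
      ∑ h ∈ Icc k γ, (-1 : ℝ) ^ (h - k) * ((h - 1).choose (k - 1)) *
        if (Even (h - k) ↔ Even (γ - k))
        then ((corank1Subsets h (W : Set (EuclideanSpace ℝ (Fin n)))).ncard : ℝ)
        else ((indepSubsets h (W : Set (EuclideanSpace ℝ (Fin n)))).ncard : ℝ) := by
  rw [sieveSeries_eq_sum_Icc, Nat.add_sub_cancel' hkγ]
  push_cast
  simp only [ncard_indepSubsets, ncard_corank1Subsets]

theorem sieve_inequality_for_independent_fraction_general (n : ℕ)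
    (W : Finset (EuclideanSpace ℝ (Fin n)))
    (M : ℕ) (hM : W.card = M) (k : ℕ) (hk : 1 ≤ k)
    (α β : ℕ) (hkβ : k ≤ β) (hα : Odd (α - k)) (hβ : Even (β - k)) :
    (∑ h ∈ Finset.Icc k α, (-1 : ℝ) ^ (h - k) * ((h - 1).choose (k - 1)) *
        (if Even (h - k) then ((indepSubsets h (↑W : Set (EuclideanSpace ℝ (Fin n)))).ncard : ℝ)
         else ((corank1Subsets h (↑W : Set (EuclideanSpace ℝ (Fin n)))).ncard : ℝ)) ≤
      (if k ≤ M then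
        ((indepSubsets k (↑W : Set (EuclideanSpace ℝ (Fin n)))).ncard : ℝ) / (M.choose k)
       else 0)) ∧
    ((if k ≤ M then
        ((indepSubsets k (↑W : Set (EuclideanSpace ℝ (Fin n)))).ncard : ℝ) / (M.choose k)
      else 0) ≤
      ∑ h ∈ Finset.Icc k β, (-1 : ℝ) ^ (h - k) * ((h - 1).choose (k - 1)) *
        (if Even (h - k) then ((corank1Subsets h (↑W : Set (EuclideanSpace ℝ (Fin n)))).ncard : ℝ)
         else ((indepSubsets h (↑W : Set (EuclideanSpace ℝ (Fin n)))).ncard : ℝ))) := by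
  subst hM
  have hmono := corank_le_corank_insert ℝ (V := EuclideanSpace ℝ (Fin n))
  have hstep := corank_insert_le ℝ (V := EuclideanSpace ℝ (Fin n))
  have hlower := sieveSeries_corank_eq W (k := k) (γ := α) (by have := hα.pos; omega)
  have hupper := sieveSeries_corank_eq W hkβ
  simp only [Nat.not_even_iff_odd.mpr hα, hβ, iff_false, iff_true, ite_not] at hlower hupper
  rw [← hlower, ← hupper, ncard_indepSubsets]
  rcases lt_or_ge W.card k with hWk | hkW
  · simp [not_le.mpr hWk, sieveSeries_eq_zero_of_card_lt _ _ hWk]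
  have hC : (0 : ℝ) < W.card.choose k := by exact_mod_cast Nat.choose_pos hkW
  rw [if_pos hkW, le_div_iff₀ hC, div_le_iff₀ hC]
  constructor
  · have h := choose_mul_sieveSeries_le hmono hstep hk hα W
    rw [mul_comm]
    exact_mod_cast h
  · have h₁ : #{E ∈ W.powersetCard k | corank ℝ E = 0} ≤
        #{E ∈ W.powersetCard k | corank ℝ E ≤ 1} :=
      card_le_card (monotone_filter_right _ fun E _ (h : corank ℝ E = 0) => h.trans_le zero_le_one)
    have h₂ := card_le_choose_mul_sieveSeries hmono hstep hk hβ W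
    rw [mul_comm]
    exact_mod_cast (Nat.cast_le.mpr h₁).trans h₂

theorem sieve_inequality_for_independent_fraction (n : ℕ)
    (W : Finset (EuclideanSpace ℝ (Fin n))) (h0 : (0 : EuclideanSpace ℝ (Fin n)) ∉ W)
    (M : ℕ) (hM : W.card = M) (k : ℕ) (hk : 1 ≤ k)
    (α β : ℕ) (hkα : k ≤ α) (hkβ : k ≤ β) (hα : Odd (α - k)) (hβ : Even (β - k)) :
    (∑ h ∈ Finset.Icc k α, (-1 : ℝ) ^ (h - k) * ((h - 1).choose (k - 1)) *
        (if Even (h - k) then ((indepSubsets h (↑W : Set (EuclideanSpace ℝ (Fin n)))).ncard : ℝ)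
         else ((corank1Subsets h (↑W : Set (EuclideanSpace ℝ (Fin n)))).ncard : ℝ)) ≤
      (if k ≤ M then
        ((indepSubsets k (↑W : Set (EuclideanSpace ℝ (Fin n)))).ncard : ℝ) / (M.choose k)
       else 0)) ∧
    ((if k ≤ M then
        ((indepSubsets k (↑W : Set (EuclideanSpace ℝ (Fin n)))).ncard : ℝ) / (M.choose k)
      else 0) ≤
      ∑ h ∈ Finset.Icc k β, (-1 : ℝ) ^ (h - k) * ((h - 1).choose (k - 1)) *
        (if Even (h - k) then ((corank1Subsets h (↑W : Set (EuclideanSpace ℝ (Fin n)))).ncard : ℝ)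
         else ((indepSubsets h (↑W : Set (EuclideanSpace ℝ (Fin n)))).ncard : ℝ))) :=
  sieve_inequality_for_independent_fraction_general n W M hM k hk α β hkβ hα hβ
end
end

section
/- Let n ≥ 2 and 1 ≤ N < n be integers, let 0 ≤ s < t be reals with V = t - s, and let T ⊆ [0,π]^{N(N-1)/2} be a Borel set. Define f : (ℝ^n)^N → ℝ by f(x_1, ..., x_N) = [∏_{i=1}^N 1(U·‖x_i‖^n ∈ [s,t])] · 1(({θ_{i,j}}_{1 ≤ j < i ≤ N}) ∈ T), where U is the volume of the n-dimensional unit ball. Then ∫_{(ℝ^n)^N} f(x_1, ..., x_N) dx_1 ⋯ dx_N = A(T) · V^N. -/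
open MeasureTheory Matrix Metric
open scoped Classical

noncomputable section

/-- `Uvol n` is the volume of the `n`-dimensional unit ball. -/
def Uvol (n : ℕ) : ℝ := (volume (Metric.ball (0 : EuclideanSpace ℝ (Fin n)) 1)).toReal

/-- The tuple of angles `θ_{i,j}` (for `j < i`) of a tuple of vectors `x_1, ..., x_N`:
`θ_{i,j}` is the angle between `x_i` and `x*_j`, the component of `x_j` orthogonal to
`span(x_1, ..., x_{j-1})` (obtained from the Gram-Schmidt process). -/
def angTuple {n N : ℕ} (x : Fin N → EuclideanSpace ℝ (Fin n)) :
    {p : Fin N × Fin N // p.2 < p.1} → ℝ :=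
  fun p => InnerProductGeometry.angle (x p.1.1)
    (@InnerProductSpace.gramSchmidt ℝ _ _ _ _ (Fin N) _ _ (inferInstance : WellFoundedLT (Fin N)) x p.1.2)

/-- The uniform (rotation invariant) probability measure on the unit sphere `S^{n-1}`. -/
def sphereMeasure (n : ℕ) : Measure (Metric.sphere (0 : EuclideanSpace ℝ (Fin n)) 1) :=
  (((volume : Measure (EuclideanSpace ℝ (Fin n))).toSphere Set.univ)⁻¹) •
    (volume : Measure (EuclideanSpace ℝ (Fin n))).toSphere

/-- `Aprob n N T` is the probability that `N` independent uniformly distributed random points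
on the unit sphere `S^{n-1}` have their angle tuple `{θ_{i,j}}` in `T`. -/
def Aprob (n N : ℕ) (T : Set ({p : Fin N × Fin N // p.2 < p.1} → ℝ)) : ℝ :=
  ((Measure.pi fun _ : Fin N => sphereMeasure n)
    {u | angTuple (fun i => ((u i : EuclideanSpace ℝ (Fin n)))) ∈ T}).toReal

/-! Polar coordinates in each factor. Lebesgue measure on `ℝⁿ \ {0}` is the product of the
surface measure `σ` on the unit sphere, of total mass `n·U`, and the radial measure `rⁿ⁻¹ dr`.
Gram–Schmidt commutes with rescaling its inputs and angles ignore positive factors, so the angles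
`θ_{i,j}` depend only on the directions `x_i / ‖x_i‖`. The integration domain is therefore the
product of an angular set of `σ^N`-measure `(n·U)^N · A(T)` with the `N`-th power of the shell
`{r | U rⁿ ∈ [s, t]}`, whose radial measure is `(t - s) / (n·U)`. -/

namespace InnerProductSpace

variable {𝕜 E ι : Type*} [RCLike 𝕜] [NormedAddCommGroup E] [InnerProductSpace 𝕜 E]
  [LinearOrder ι] [LocallyFiniteOrderBot ι] [WellFoundedLT ι]

theorem gramSchmidt_smul_of_ne_zero (f : ι → E) {c : ι → 𝕜} (hc : ∀ i, c i ≠ 0) (n : ι) :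
    gramSchmidt 𝕜 (fun i => c i • f i) n = c n • gramSchmidt 𝕜 f n := by
  induction n using WellFoundedLT.induction with
  | ind n ih =>
    rw [gramSchmidt_def, gramSchmidt_def 𝕜 f, smul_sub, Finset.smul_sum]
    congr 1
    refine Finset.sum_congr rfl fun i hi => ?_
    simp only [ih i (Finset.mem_Iio.1 hi), Submodule.span_singleton_smul_eq (hc i).isUnit,
      map_smul]

theorem measurable_gramSchmidt [MeasurableSpace E] [BorelSpace E] [SecondCountableTopology E]
    (n : ι) : Measurable fun f : ι → E => gramSchmidt 𝕜 f n := by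
  induction n using WellFoundedLT.induction with
  | ind n ih =>
    have hdef : (fun f : ι → E => gramSchmidt 𝕜 f n) = fun f => f n - ∑ i ∈ Finset.Iio n,
        (inner 𝕜 (gramSchmidt 𝕜 f i) (f n) / (‖gramSchmidt 𝕜 f i‖ : 𝕜) ^ 2) •
          gramSchmidt 𝕜 f i := by
      funext f
      exact eq_sub_of_add_eq (gramSchmidt_def'' 𝕜 f n).symm
    rw [hdef]
    refine (measurable_pi_apply n).sub (Finset.measurable_sum _ fun i hi => ?_)
    have hi := ih i (Finset.mem_Iio.1 hi)
    exact ((hi.inner (measurable_pi_apply n)).div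
      ((RCLike.measurable_ofReal.comp hi.norm).pow_const 2)).smul hi

end InnerProductSpace

section Angles

variable {n N : ℕ}

theorem angTuple_apply (x : Fin N → EuclideanSpace ℝ (Fin n))
    (p : {p : Fin N × Fin N // p.2 < p.1}) :
    angTuple x p =
      InnerProductGeometry.angle (x p.1.1) (InnerProductSpace.gramSchmidt ℝ x p.1.2) :=
  rfl

theorem angTuple_smul_of_pos (x : Fin N → EuclideanSpace ℝ (Fin n)) {c : Fin N → ℝ}
    (hc : ∀ i, 0 < c i) : angTuple (fun i => c i • x i) = angTuple x := by
  funext p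
  rw [angTuple_apply, angTuple_apply,
    InnerProductSpace.gramSchmidt_smul_of_ne_zero x (fun i => (hc i).ne'),
    InnerProductGeometry.angle_smul_left_of_pos _ _ (hc _),
    InnerProductGeometry.angle_smul_right_of_pos _ _ (hc _)]

theorem angTuple_inv_norm_smul (x : Fin N → EuclideanSpace ℝ (Fin n)) :
    angTuple (fun i => ‖x i‖⁻¹ • x i) = angTuple x := by
  -- `‖0‖⁻¹ = 0` is not a positive factor, but any positive factor fixes `0` as well.
  have hpos : ∀ i, 0 < if x i = 0 then 1 else ‖x i‖⁻¹ := fun i => by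
    split_ifs with h
    exacts [one_pos, inv_pos.2 (norm_pos_iff.2 h)]
  convert angTuple_smul_of_pos x hpos using 3 with i
  split_ifs with h <;> simp [h]

theorem measurable_angTuple :
    Measurable (angTuple : (Fin N → EuclideanSpace ℝ (Fin n)) → _) := by
  refine measurable_pi_lambda _ fun p => ?_
  have hx : Measurable fun x : Fin N → EuclideanSpace ℝ (Fin n) => x p.1.1 :=
    measurable_pi_apply _
  have hg := InnerProductSpace.measurable_gramSchmidt (𝕜 := ℝ)
    (E := EuclideanSpace ℝ (Fin n)) p.1.2
  exact Real.continuous_arccos.measurable.comp ((hx.inner hg).div (hx.norm.mul hg.norm))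

end Angles

section Polar

open Measure Module

variable {E : Type*} [NormedAddCommGroup E] [NormedSpace ℝ E] [MeasurableSpace E]
  [BorelSpace E] {ι : Type*} [Fintype ι]

theorem measurableSet_setOf_inv_norm_smul_mem_and_norm_mem {A : Set (ι → E)} {R : Set ℝ}
    (hA : MeasurableSet A) (hR : MeasurableSet R) :
    MeasurableSet {x : ι → E | (fun i => ‖x i‖⁻¹ • x i) ∈ A ∧ ∀ i, ‖x i‖ ∈ R} := by
  simp only [Set.ofPred_and, Set.ofPred_forall]
  exact (measurable_pi_lambda _ (fun i => (measurable_pi_apply i).norm.inv.smul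
    (measurable_pi_apply i)) hA).inter (.iInter fun i => (measurable_pi_apply i).norm hR)

variable [FiniteDimensional ℝ E] (μ : Measure E) [μ.IsAddHaarMeasure]

theorem measurePreserving_pi_homeomorphUnitSphereProd :
    MeasurePreserving
      (fun x : ι → ({0}ᶜ : Set E) => MeasurableEquiv.arrowProdEquivProdArrow _ _ ι
        fun i => homeomorphUnitSphereProd E (x i))
      (Measure.pi fun _ => μ.comap (↑))
      ((Measure.pi fun _ => μ.toSphere).prod
        (Measure.pi fun _ => volumeIoiPow (finrank ℝ E - 1))) := by
  have : SigmaFinite (μ.toSphere.prod (volumeIoiPow (finrank ℝ E - 1))) := inferInstance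
  exact (measurePreserving_arrowProdEquivProdArrow _ _ ι _ _).comp
    (measurePreserving_pi _ _ fun _ => μ.measurePreserving_homeomorphUnitSphereProd)

theorem measurePreserving_pi_subtype_val_compl_zero [Nontrivial E] :
    MeasurePreserving (fun (x : ι → ({0}ᶜ : Set E)) i => (x i : E))
      (Measure.pi fun _ => μ.comap (↑)) (Measure.pi fun _ => μ) :=
  measurePreserving_pi _ _ fun _ => by
    simpa using measurePreserving_subtype_coe (μa := μ) (measurableSet_singleton (0 : E)).compl

theorem pi_setOf_inv_norm_smul_mem_and_norm_mem [Nontrivial E] {A : Set (ι → E)}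
    {R : Set ℝ} (hA : MeasurableSet A) (hR : MeasurableSet R) :
    Measure.pi (fun _ : ι => μ) {x | (fun i => ‖x i‖⁻¹ • x i) ∈ A ∧ ∀ i, ‖x i‖ ∈ R} =
      Measure.pi (fun _ => μ.toSphere) ((fun u i => (u i : E)) ⁻¹' A) *
        volumeIoiPow (finrank ℝ E - 1) (Subtype.val ⁻¹' R) ^ Fintype.card ι := by
  have hA' : MeasurableSet ((fun (u : ι → sphere (0 : E) 1) i => (u i : E)) ⁻¹' A) :=
    measurable_pi_lambda _ (fun i => measurable_subtype_coe.comp (measurable_pi_apply i)) hA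
  have hpre : (fun (x : ι → ({0}ᶜ : Set E)) i => (x i : E)) ⁻¹'
        {x | (fun i => ‖x i‖⁻¹ • x i) ∈ A ∧ ∀ i, ‖x i‖ ∈ R} =
      (fun x : ι → ({0}ᶜ : Set E) => MeasurableEquiv.arrowProdEquivProdArrow _ _ ι
        fun i => homeomorphUnitSphereProd E (x i)) ⁻¹'
        (((fun u i => (u i : E)) ⁻¹' A) ×ˢ Set.univ.pi fun _ => Subtype.val ⁻¹' R) := by
    ext x
    simp [MeasurableEquiv.arrowProdEquivProdArrow, Equiv.arrowProdEquivProdArrow]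
  rw [← (measurePreserving_pi_subtype_val_compl_zero μ).measure_preimage
      (measurableSet_setOf_inv_norm_smul_mem_and_norm_mem hA hR).nullMeasurableSet,
    hpre, (measurePreserving_pi_homeomorphUnitSphereProd μ).measure_preimage
      (hA'.prod (.univ_pi fun _ => measurable_subtype_coe hR)).nullMeasurableSet,
    Measure.prod_prod, Measure.pi_pi, Finset.prod_const, Finset.card_univ]

end Polar

section Radial

open Measure

theorem volumeIoiPow_preimage_Icc (k : ℕ) {α β : ℝ} (hα : 0 ≤ α) (hαβ : α ≤ β) :
    volumeIoiPow k (Subtype.val ⁻¹' Set.Icc α β) =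
      ENNReal.ofReal ((β ^ (k + 1) - α ^ (k + 1)) / (k + 1)) := by
  have hae : (Set.Ioi 0 ∩ Set.Icc α β : Set ℝ) =ᵐ[volume] Set.Ioc α β := by
    have hsub : Set.Ioi 0 ∩ Set.Icc α β = Set.Icc α β \ {0} := by
      ext x
      simp only [Set.mem_inter_iff, Set.mem_Ioi, Set.mem_sdiff, Set.mem_singleton_iff]
      exact ⟨fun h => ⟨h.2, h.1.ne'⟩, fun h => ⟨(hα.trans h.1.1).lt_of_ne' h.2, h.1⟩⟩
    rw [hsub]
    exact (sdiff_null_ae_eq_self (measure_singleton 0)).trans Ioc_ae_eq_Icc.symm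
  rw [volumeIoiPow, withDensity_apply _ (measurable_subtype_coe measurableSet_Icc),
    setLIntegral_subtype measurableSet_Ioi _ fun x : ℝ => ENNReal.ofReal (x ^ k),
    Subtype.image_preimage_coe, restrict_congr_set hae,
    ← ofReal_integral_eq_lintegral_ofReal (intervalIntegral.intervalIntegrable_pow _).1,
    ← intervalIntegral.integral_of_le hαβ, integral_pow]
  filter_upwards [ae_restrict_mem measurableSet_Ioc] with y hy
  exact pow_nonneg (hα.trans hy.1.le) _

theorem volumeIoiPow_preimage_pow_preimage_Icc {n : ℕ} (hn : n ≠ 0) {a b : ℝ} (ha : 0 ≤ a)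
    (hab : a ≤ b) :
    volumeIoiPow (n - 1) (Subtype.val ⁻¹' ((· ^ n) ⁻¹' Set.Icc a b)) =
      ENNReal.ofReal ((b - a) / n) := by
  have hroot {c : ℝ} (hc : 0 ≤ c) : (c ^ (n⁻¹ : ℝ)) ^ n = c := Real.rpow_inv_natCast_pow hc hn
  have hα : 0 ≤ a ^ (n⁻¹ : ℝ) := Real.rpow_nonneg ha _
  have hβ : 0 ≤ b ^ (n⁻¹ : ℝ) := Real.rpow_nonneg (ha.trans hab) _
  have hset : (Subtype.val ⁻¹' ((· ^ n) ⁻¹' Set.Icc a b) : Set (Set.Ioi (0 : ℝ))) =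
      Subtype.val ⁻¹' Set.Icc (a ^ (n⁻¹ : ℝ)) (b ^ (n⁻¹ : ℝ)) := by
    ext ⟨r, hr⟩
    conv_lhs => rw [← hroot ha, ← hroot (ha.trans hab)]
    simp only [Set.mem_preimage, Set.mem_Icc, pow_le_pow_iff_left₀ hα (le_of_lt hr) hn,
      pow_le_pow_iff_left₀ (le_of_lt hr) hβ hn]
  rw [hset, volumeIoiPow_preimage_Icc _ hα (Real.rpow_le_rpow ha hab (by positivity)),
    Nat.sub_add_cancel (Nat.one_le_iff_ne_zero.2 hn), hroot ha, hroot (ha.trans hab),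
    Nat.cast_pred (Nat.pos_of_ne_zero hn), sub_add_cancel]

end Radial

theorem MeasureTheory.Measure.pi_const_smul {ι α : Type*} [Fintype ι] [MeasurableSpace α]
    (μ : Measure α) [SigmaFinite μ] {c : ENNReal} (hc : c ≠ ⊤) :
    Measure.pi (fun _ : ι => c • μ) = c ^ Fintype.card ι • Measure.pi fun _ => μ := by
  lift c to NNReal using hc
  have : SigmaFinite ((c : ENNReal) • μ) := ENNReal.smul_def c μ ▸ inferInstance
  refine Measure.pi_eq fun s _ => ?_
  simp [Measure.pi_pi, Finset.prod_mul_distrib]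

theorem uvol_pos (n : ℕ) : 0 < Uvol n :=
  ENNReal.toReal_pos (measure_ball_pos _ _ one_pos).ne' measure_ball_lt_top.ne

theorem sphereMeasure_eq_inv_smul_toSphere (n : ℕ) :
    sphereMeasure n = (ENNReal.ofReal (n * Uvol n))⁻¹ • volume.toSphere := by
  rw [sphereMeasure, Measure.toSphere_apply_univ, finrank_euclideanSpace_fin, Uvol,
    ENNReal.ofReal_mul (Nat.cast_nonneg n), ENNReal.ofReal_natCast,
    ENNReal.ofReal_toReal measure_ball_lt_top.ne]

theorem aprob_eq_toSphere_div {n : ℕ} (hn : n ≠ 0) (N : ℕ)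
    (T : Set ({p : Fin N × Fin N // p.2 < p.1} → ℝ)) :
    Aprob n N T =
      (Measure.pi (fun _ : Fin N => (volume : Measure (EuclideanSpace ℝ (Fin n))).toSphere)
        ((fun u i => (u i : EuclideanSpace ℝ (Fin n))) ⁻¹' (angTuple ⁻¹' T))).toReal /
        (n * Uvol n) ^ N := by
  have hpos : 0 < (n : ℝ) * Uvol n :=
    mul_pos (Nat.cast_pos.2 (Nat.pos_of_ne_zero hn)) (uvol_pos n)
  rw [Aprob, sphereMeasure_eq_inv_smul_toSphere,
    Measure.pi_const_smul _ (ENNReal.inv_ne_top.2 (ENNReal.ofReal_pos.2 hpos).ne'),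
    Measure.smul_apply, smul_eq_mul, ENNReal.toReal_mul, ENNReal.toReal_pow, ENNReal.toReal_inv,
    ENNReal.toReal_ofReal hpos.le, Fintype.card_fin, inv_pow, inv_mul_eq_div]
  rfl

theorem integral_indicator_annulus_angles_general (n N : ℕ) (hn : 2 ≤ n)
    (s t : ℝ) (hs : 0 ≤ s) (hst : s < t)
    (T : Set ({p : Fin N × Fin N // p.2 < p.1} → ℝ)) (hT : MeasurableSet T) :
    ∫ x : Fin N → EuclideanSpace ℝ (Fin n),
        (if (∀ i, Uvol n * ‖x i‖ ^ (n : ℕ) ∈ Set.Icc s t) ∧ angTuple x ∈ T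
         then (1 : ℝ) else 0) =
      Aprob n N T * (t - s) ^ N := by
  have hn0 : n ≠ 0 := by omega
  have hU := uvol_pos n
  -- makes `EuclideanSpace ℝ (Fin n)` nontrivial
  have : NeZero n := ⟨hn0⟩
  set R : Set ℝ := (· ^ n) ⁻¹' Set.Icc (s / Uvol n) (t / Uvol n)
  have hR : MeasurableSet R := measurable_id.pow_const n measurableSet_Icc
  have hA : MeasurableSet (angTuple (n := n) ⁻¹' T) := measurable_angTuple hT
  have hind : (fun x : Fin N → EuclideanSpace ℝ (Fin n) =>
      if (∀ i, Uvol n * ‖x i‖ ^ n ∈ Set.Icc s t) ∧ angTuple x ∈ T then (1 : ℝ) else 0) =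
      {x | (fun i => ‖x i‖⁻¹ • x i) ∈ angTuple ⁻¹' T ∧ ∀ i, ‖x i‖ ∈ R}.indicator 1 := by
    ext x
    simp [Set.indicator_apply, R, angTuple_inv_norm_smul, le_div_iff₀ hU, div_le_iff₀ hU,
      mul_comm, and_comm]
  have hshell := volumeIoiPow_preimage_pow_preimage_Icc hn0 (div_nonneg hs hU.le)
    (div_le_div_of_nonneg_right hst.le hU.le)
  rw [← sub_div, div_div, mul_comm (Uvol n)] at hshell
  rw [hind, integral_indicator_one (measurableSet_setOf_inv_norm_smul_mem_and_norm_mem hA hR),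
    measureReal_def, volume_pi, pi_setOf_inv_norm_smul_mem_and_norm_mem _ hA hR,
    finrank_euclideanSpace_fin, hshell, ENNReal.toReal_mul, ENNReal.toReal_pow,
    ENNReal.toReal_ofReal (div_nonneg (sub_nonneg.2 hst.le) (by positivity)), Fintype.card_fin,
    aprob_eq_toSphere_div hn0, div_pow, mul_div_assoc', div_mul_eq_mul_div]

theorem integral_indicator_annulus_angles (n N : ℕ) (hn : 2 ≤ n) (hN : 1 ≤ N) (hNn : N < n)
    (s t : ℝ) (hs : 0 ≤ s) (hst : s < t)
    (T : Set ({p : Fin N × Fin N // p.2 < p.1} → ℝ)) (hT : MeasurableSet T)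
    (hTrange : ∀ θ ∈ T, ∀ p, θ p ∈ Set.Icc 0 Real.pi) :
    ∫ x : Fin N → EuclideanSpace ℝ (Fin n),
        (if (∀ i, Uvol n * ‖x i‖ ^ (n : ℕ) ∈ Set.Icc s t) ∧ angTuple x ∈ T
         then (1 : ℝ) else 0) =
      Aprob n N T * (t - s) ^ N :=
  integral_indicator_annulus_angles_general n N hn s t hs hst T hT
end
end
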